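/- arXiv:1111.1075 — 10 statements merged into one kernel-verified Lean document; each statement's English description precedes it below -/
import Mathlib

section
/- The reachability relation — two directed edges are equivalent if there exists an alternating walk containing both — is an equivalence relation on the edge set of any digraph. -/
variable {V : Type*}

/-- An alternating walk: a sequence of edges where consecutive edges
alternately share their initial or terminal vertex (the Boolean `b`
selects which of the two alternation patterns is used). -/
def IsAltWalk (A : V → V → Prop) {n : ℕ} (w : Fin n → V × V) (b : Bool) : Prop :=
  (∀ i, A (w i).1 (w i).2) ∧
  ∀ (i : Fin n) (h : (i : ℕ) + 1 < n),
    if (((i : ℕ) % 2 == 0) == b)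
    then (w i).1 = (w ⟨(i : ℕ) + 1, h⟩).1
    else (w i).2 = (w ⟨(i : ℕ) + 1, h⟩).2

/-- Two edges are reachable from each other iff some alternating walk contains both. -/
def Reach (A : V → V → Prop) (e f : V × V) : Prop :=
  ∃ (n : ℕ) (w : Fin n → V × V) (b : Bool),
    IsAltWalk A w b ∧ (∃ i, w i = e) ∧ (∃ j, w j = f)

/-- A digraph automorphism. -/
def IsAuto (A : V → V → Prop) (f : V ≃ V) : Prop :=
  ∀ u v, A u v ↔ A (f u) (f v)

/-- An `n`-arc, given by its sequence of `n+1` vertices. -/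
def IsArc (A : V → V → Prop) {n : ℕ} (p : Fin (n + 1) → V) : Prop :=
  ∀ i : Fin n, A (p i.castSucc) (p i.succ)

/-- Highly arc transitive: for every `n` the set of `n`-arcs is nonempty and the
automorphism group acts transitively on it. -/
def IsHAT (A : V → V → Prop) : Prop :=
  ∀ n : ℕ, (∃ p : Fin (n + 1) → V, IsArc A p) ∧
    ∀ p q : Fin (n + 1) → V, IsArc A p → IsArc A q →
      ∃ f : V ≃ V, IsAuto A f ∧ ∀ i, f (p i) = q i

/-- Vertices of the subgraph `Δ(e)` spanned by the reachability class of `e`. -/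
def DeltaVerts (A : V → V → Prop) (e : V × V) : Set V :=
  {v | ∃ u, Reach A e (v, u) ∨ Reach A e (u, v)}

/-- `φ` is a digraph epimorphism onto the integer line `Z`
(edge-preserving, vertex-surjective and edge-surjective), i.e. Property Z. -/
def IsEpiZ (A : V → V → Prop) (φ : V → ℤ) : Prop :=
  (∀ u v, A u v → φ v = φ u + 1) ∧ Function.Surjective φ ∧
    ∀ i : ℤ, ∃ u v, A u v ∧ φ u = i


lemma parity_beq (i k : ℕ) (b : Bool) :
    ((k % 2 == 0) == (if i % 2 = 0 then b else !b)) = (((i + k) % 2 == 0) == b) := by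
  have hik := Nat.add_mod i k 2
  rcases Nat.mod_two_eq_zero_or_one i with hi | hi <;>
    rcases Nat.mod_two_eq_zero_or_one k with hk | hk <;>
      rw [hi, hk] at hik <;> cases b <;> simp [hi, hk, hik]

lemma reach_norm {A : V → V → Prop} {e f : V × V} (h : Reach A e f) :
    ∃ (m : ℕ) (v : Fin (m + 1) → V × V) (b : Bool),
      IsAltWalk A v b ∧ v 0 = e ∧ v (Fin.last m) = f := by
  obtain ⟨n, w, b, ⟨hA, hAlt⟩, ⟨i, hi⟩, ⟨j, hj⟩⟩ := h
  rcases le_or_gt (i : ℕ) (j : ℕ) with hij | hij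
  · refine ⟨(j : ℕ) - i, fun k => w ⟨(i : ℕ) + k, by omega⟩,
      if (i : ℕ) % 2 = 0 then b else !b, ⟨fun k => hA _, ?_⟩, ?_, ?_⟩
    · intro k hk
      have h1 : (i : ℕ) + (k : ℕ) + 1 < n := by omega
      have hstep := hAlt ⟨(i : ℕ) + (k : ℕ), by omega⟩ h1
      rw [parity_beq]
      exact hstep
    · have : (⟨(i : ℕ) + ((0 : Fin ((j:ℕ) - i + 1)) : ℕ), by omega⟩ : Fin n) = i :=
        Fin.ext (by simp)
      beta_reduce; rw [this]; exact hi
    · have : (⟨(i : ℕ) + ((Fin.last ((j:ℕ) - i)) : ℕ), by omega⟩ : Fin n) = j :=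
        Fin.ext (by simp [Fin.last]; omega)
      beta_reduce; rw [this]; exact hj
  · refine ⟨(i : ℕ) - j, fun k => w ⟨(i : ℕ) - k, by omega⟩,
      if ((i : ℕ) - 1) % 2 = 0 then b else !b, ⟨fun k => hA _, ?_⟩, ?_, ?_⟩
    · intro k hk
      have pf2 : (i : ℕ) - ((k : ℕ) + 1) + 1 < n := by omega
      have hstep := hAlt ⟨(i : ℕ) - ((k : ℕ) + 1), by omega⟩ pf2
      have hW : (⟨(i : ℕ) - ((k : ℕ) + 1) + 1, pf2⟩ : Fin n) = ⟨(i : ℕ) - (k : ℕ), by omega⟩ :=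
        Fin.ext (by simp; omega)
      rw [hW] at hstep
      have hm : ((i : ℕ) - 1 + (k : ℕ)) % 2 = ((i : ℕ) - ((k : ℕ) + 1)) % 2 := by omega
      have hc : (((k : ℕ) % 2 == 0) == (if ((i : ℕ) - 1) % 2 = 0 then b else !b))
          = ((((i : ℕ) - ((k : ℕ) + 1)) % 2 == 0) == b) := by
        rw [parity_beq, hm]
      rw [hc]
      split at hstep
      · next hC => rw [if_pos hC]; exact hstep.symm
      · next hC => rw [if_neg hC]; exact hstep.symm
    · have : (⟨(i : ℕ) - ((0 : Fin ((i:ℕ) - j + 1)) : ℕ), by omega⟩ : Fin n) = i :=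
        Fin.ext (by simp)
      beta_reduce; rw [this]; exact hi
    · have : (⟨(i : ℕ) - ((Fin.last ((i:ℕ) - j)) : ℕ), by omega⟩ : Fin n) = j :=
        Fin.ext (by simp [Fin.last]; omega)
      beta_reduce; rw [this]; exact hj

lemma reach_glue {A : V → V → Prop} {e f g : V × V}
    (h1 : ∃ (m : ℕ) (v : Fin (m + 1) → V × V) (b : Bool),
      IsAltWalk A v b ∧ v 0 = e ∧ v (Fin.last m) = f)
    (h2 : ∃ (m : ℕ) (v : Fin (m + 1) → V × V) (b : Bool),
      IsAltWalk A v b ∧ v 0 = f ∧ v (Fin.last m) = g) :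
    Reach A e g := by
  obtain ⟨m, w, b1, ⟨hA1, hAlt1⟩, hw0, hwm⟩ := h1
  obtain ⟨n, w', b2, ⟨hA2, hAlt2⟩, hw'0, hw'n⟩ := h2
  set s : ℕ := if ((m % 2 == 0) == (b1 == b2) : Bool) then m else m + 1 with hs
  have hsm : m ≤ s ∧ s ≤ m + 1 := by rw [hs]; split <;> omega
  have hs2 : s % 2 = 0 ↔ b1 = b2 := by
    rw [hs]; cases b1 <;> cases b2 <;>
      rcases Nat.mod_two_eq_zero_or_one m with h | h <;> simp [h] <;> omega
  set u : Fin (s + n + 1) → V × V := fun k =>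
    if h : (k : ℕ) < s then
      (if h' : (k : ℕ) < m + 1 then w ⟨k, h'⟩ else f)
    else w' ⟨(k : ℕ) - s, by omega⟩ with hu
  have hu1 : ∀ (k : Fin (s + n + 1)) (h : (k : ℕ) < m + 1), u k = w ⟨k, h⟩ := by
    intro k h
    by_cases hks : (k : ℕ) < s
    · simp [hu, hks, h, Nat.lt_add_one_iff.mp h]
    · have hk1 : (k : ℕ) = m := by omega
      have hk2 : s = m := by omega
      simp only [hu, dif_neg hks]
      have : (⟨(k : ℕ) - s, by omega⟩ : Fin (n + 1)) = 0 := Fin.ext (by simp; omega)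
      rw [this, hw'0, ← hwm]
      congr 1
      exact Fin.ext (by simp [Fin.last]; omega)
  have hu2 : ∀ (k : Fin (s + n + 1)) (h : s ≤ (k : ℕ)), u k = w' ⟨(k : ℕ) - s, by omega⟩ := by
    intro k h
    simp [hu, Nat.not_lt.2 h]
  refine ⟨s + n + 1, u, b1, ⟨?_, ?_⟩, ⟨⟨0, by omega⟩, ?_⟩, ⟨⟨s + n, by omega⟩, ?_⟩⟩
  · intro k
    by_cases h : (k : ℕ) < m + 1
    · rw [hu1 k h]; exact hA1 _
    · rw [hu2 k (by omega)]; exact hA2 _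
  · intro k hk
    by_cases h1 : (k : ℕ) + 1 < m + 1
    · rw [hu1 k (by omega), hu1 ⟨(k : ℕ) + 1, hk⟩ (by simp only [Fin.val_mk]; omega)]
      exact hAlt1 ⟨(k : ℕ), by omega⟩ h1
    · by_cases h2 : s ≤ (k : ℕ)
      · rw [hu2 k h2, hu2 ⟨(k : ℕ) + 1, hk⟩ (by simp only [Fin.val_mk]; omega)]
        have hlt : (k : ℕ) - s + 1 < n + 1 := by omega
        have hstep := hAlt2 ⟨(k : ℕ) - s, by omega⟩ hlt
        have hidx : (⟨(k : ℕ) - s + 1, hlt⟩ : Fin (n + 1)) = ⟨(k : ℕ) + 1 - s, by omega⟩ :=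
          Fin.ext (by simp; omega)
        rw [hidx] at hstep
        have hcond : (((k : ℕ) % 2 == 0) == b1) = ((((k : ℕ) - s) % 2 == 0) == b2) := by
          rcases Nat.mod_two_eq_zero_or_one s with hp | hp
          · have hb : b1 = b2 := hs2.1 hp
            have hmk : ((k : ℕ) - s) % 2 = (k : ℕ) % 2 := by omega
            rw [hb, hmk]
          · have hb' : b2 = !b1 := by
              have : ¬ b1 = b2 := fun hh => by rw [hs2.2 hh] at hp; omega
              cases b1 <;> cases b2 <;> simp_all
            have hmk : ((k : ℕ) - s) % 2 = ((k : ℕ) + 1) % 2 := by omega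
            rw [hb', hmk]
            rcases Nat.mod_two_eq_zero_or_one (k : ℕ) with h | h <;>
              have h' : ((k : ℕ) + 1) % 2 = 1 - (k : ℕ) % 2 := by omega
            all_goals (rw [h] at h' ⊢; rw [h']; cases b1 <;> rfl)
        rw [hcond]
        exact hstep
      · have hsm1 : s = m + 1 := by omega
        have hkm : (k : ℕ) = m := by omega
        have e1 : u k = f := by
          rw [hu1 k (by omega), ← hwm]
          congr 1
          exact Fin.ext (by simp [Fin.last]; omega)
        have e2 : u ⟨(k : ℕ) + 1, hk⟩ = f := by
          rw [hu2 ⟨(k : ℕ) + 1, hk⟩ (by simp only [Fin.val_mk]; omega), ← hw'0]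
          congr 1
          exact Fin.ext (by simp; omega)
        rw [e1, e2]
        split <;> rfl
  · rw [hu1 ⟨0, by omega⟩ (by simp only [Fin.val_mk]; omega), ← hw0]
    congr 1 <;> exact Fin.ext (by simp)
  · rw [hu2 ⟨s + n, by omega⟩ (by simp only [Fin.val_mk]; omega), ← hw'n]
    congr 1 <;> exact Fin.ext (by simp [Fin.last])
theorem reach_equivalence' (A : V → V → Prop) :
    Equivalence (fun e f : {p : V × V // A p.1 p.2} => Reach A e.1 f.1) := by
  constructor
  · intro e
    exact ⟨1, fun _ => e.1, true, ⟨fun _ => e.2, fun i h => absurd h (by omega)⟩,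
      ⟨0, rfl⟩, ⟨0, rfl⟩⟩
  · rintro e f ⟨n, w, b, hw, hi, hj⟩
    exact ⟨n, w, b, hw, hj, hi⟩
  · intro e f g h1 h2
    exact reach_glue (reach_norm h1) (reach_norm h2)

/-- The reachability relation is an equivalence relation on the edge set. -/
theorem reach_equivalence (A : V → V → Prop) :
    Equivalence (fun e f : {p : V × V // A p.1 p.2} => Reach A e.1 f.1) :=
  reach_equivalence' A
end

section
/- Let L be the digraph with vertex set ℤ × {-1,0,1} and an edge from (i,x) to (i+1,y) iff i is even, or i is odd and x + y ≠ 0. Then the map σ on the layerwise direct product D = L ×_{φ¹,φ²} L (with φ¹(i,x)=i and φ²(i,x)=i+1) defined by σ(i,x,y) = (i+1,y,x) is a digraph automorphism of D. -/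
variable {V : Type*}

/-- Vertex set of the digraph `D`: `ℤ × {-1,0,1} × {-1,0,1}`. -/
abbrev DV : Type := ℤ × SignType × SignType

/-- Edges of `D`: from `(i,x₁,y₁)` to `(i+1,x₂,y₂)` iff
(`i` even and `y₁+y₂ ≠ 0`) or (`i` odd and `x₁+x₂ ≠ 0`). -/
def DAdj (u v : DV) : Prop :=
  v.1 = u.1 + 1 ∧
    ((Even u.1 ∧ ((u.2.2 : ℤ) + (v.2.2 : ℤ) ≠ 0)) ∨
     (Odd u.1 ∧ ((u.2.1 : ℤ) + (v.2.1 : ℤ) ≠ 0)))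

/-- The shift `σ(i,x,y) = (i+1,y,x)` is a digraph automorphism of `D`. -/
theorem sigma_is_automorphism :
    Function.Bijective (fun u : DV => ((u.1 + 1, u.2.2, u.2.1) : DV)) ∧
    ∀ u v : DV, DAdj u v ↔
      DAdj (u.1 + 1, u.2.2, u.2.1) (v.1 + 1, v.2.2, v.2.1) := by
  constructor
  · constructor
    · rintro ⟨a, b, c⟩ ⟨d, e, f⟩ h
      simp only [Prod.mk.injEq] at h
      obtain ⟨h1, h2, h3⟩ := h
      have : a = d := by omega
      simp [h2, h3, this]
    · rintro ⟨a, b, c⟩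
      exact ⟨(a - 1, c, b), by simp⟩
  · rintro ⟨a, b, c⟩ ⟨d, e, f⟩
    unfold DAdj
    simp only
    constructor
    · rintro ⟨h1, h2 | h2⟩
      · exact ⟨by omega, Or.inr ⟨Even.add_one h2.1, h2.2⟩⟩
      · exact ⟨by omega, Or.inl ⟨Odd.add_one h2.1, h2.2⟩⟩
    · rintro ⟨h1, h2 | h2⟩
      · exact ⟨by omega, Or.inr ⟨Int.not_even_iff_odd.mp (Int.even_add_one.mp h2.1), h2.2⟩⟩
      · refine ⟨by omega, Or.inl ⟨?_, h2.2⟩⟩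
        by_contra h
        exact Int.not_even_iff_odd.mpr h2.1 (Int.even_add_one.mpr (Int.not_even_iff_odd.mpr (Int.not_even_iff_odd.mp h)))
end

section
/- The digraph Δ = K_{3,3} ×_{ψ¹,ψ²} AC₆, the layerwise direct product of the complete bipartite digraph K_{3,3} (all edges directed from one side to the other) with the alternating 6-cycle AC₆, is bipartite, connected, 1-arc transitive, but not complete bipartite. -/
variable {V : Type*}

/-- Vertices of the complete bipartite digraph `K₃,₃`. -/
abbrev KV : Type := Fin 2 × Fin 3

/-- All edges of `K₃,₃` go from side `0` to side `1`. -/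
def KAdj (a b : KV) : Prop := a.1 = 0 ∧ b.1 = 1

/-- Vertices of the alternating 6-cycle `AC₆`. -/
abbrev CV : Type := Fin 2 × SignType

/-- Edges of `AC₆`: from `(0,x)` to `(1,y)` iff `x + y ≠ 0`. -/
def CAdj (a b : CV) : Prop :=
  a.1 = 0 ∧ b.1 = 1 ∧ ((a.2 : ℤ) + (b.2 : ℤ) ≠ 0)

/-- Vertices of the layerwise direct product `K₃,₃ ×_ψ AC₆`. -/
abbrev PV : Type := {p : KV × CV // p.1.1 = p.2.1}

/-- Componentwise edges of the layerwise direct product. -/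
def PAdj (a b : PV) : Prop := KAdj a.1.1 b.1.1 ∧ CAdj a.1.2 b.1.2

def negPerm (τ : Equiv.Perm SignType) : Equiv.Perm SignType where
  toFun y := -τ (-y)
  invFun y := -τ.symm (-y)
  left_inv y := by simp
  right_inv y := by simp

def fmap (g0 g1 : Equiv.Perm (Fin 3)) (t0 t1 : Equiv.Perm SignType) : PV ≃ PV where
  toFun p := ⟨((p.1.1.1, (if p.1.1.1 = (0:Fin 2) then g0 else g1) p.1.1.2),
               (p.1.2.1, (if p.1.2.1 = (0:Fin 2) then t0 else t1) p.1.2.2)), p.2⟩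
  invFun p := ⟨((p.1.1.1, (if p.1.1.1 = (0:Fin 2) then g0.symm else g1.symm) p.1.1.2),
               (p.1.2.1, (if p.1.2.1 = (0:Fin 2) then t0.symm else t1.symm) p.1.2.2)), p.2⟩
  left_inv p := by
    obtain ⟨⟨⟨i,a⟩,⟨j,x⟩⟩,h⟩ := p
    simp only at h; subst h
    apply Subtype.ext
    by_cases hi : i = 0 <;> simp [hi]
  right_inv p := by
    obtain ⟨⟨⟨i,a⟩,⟨j,x⟩⟩,h⟩ := p
    simp only at h; subst h
    apply Subtype.ext
    by_cases hi : i = 0 <;> simp [hi]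

lemma fmap_auto (g0 g1 : Equiv.Perm (Fin 3)) (τ : Equiv.Perm SignType) :
    IsAuto PAdj (fmap g0 g1 τ (negPerm τ)) := by
  have key : ∀ (τ : Equiv.Perm SignType) (x y : SignType),
      (((τ x : SignType) : ℤ) + ((-(τ (-y)) : SignType) : ℤ) ≠ 0) ↔ ((x:ℤ)+(y:ℤ) ≠ 0) := by
    decide
  rintro ⟨⟨⟨i,a⟩,⟨j,x⟩⟩,h⟩ ⟨⟨⟨i',a'⟩,⟨j',x'⟩⟩,h'⟩
  simp only at h h'; subst h; subst h'
  simp only [PAdj, KAdj, CAdj, fmap, Equiv.coe_fn_mk]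
  constructor
  · rintro ⟨⟨hi, hi'⟩, -, -, hs⟩
    subst hi; subst hi'
    refine ⟨⟨rfl, rfl⟩, rfl, rfl, ?_⟩
    simpa [negPerm] using (key τ x x').mpr hs
  · rintro ⟨⟨hi, hi'⟩, -, -, hs⟩
    subst hi; subst hi'
    refine ⟨⟨rfl, rfl⟩, rfl, rfl, ?_⟩
    simp only [if_pos rfl] at hs
    rw [if_neg (by decide : ¬ (1:Fin 2) = 0)] at hs
    exact (key τ x x').mp (by simpa [negPerm] using hs)

lemma adj01 (a b : Fin 3) (x y : SignType) (hxy : (x:ℤ) + (y:ℤ) ≠ 0) :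
    (SimpleGraph.fromRel PAdj).Adj ⟨((0,a),(0,x)), rfl⟩ ⟨((1,b),(1,y)), rfl⟩ := by
  refine ⟨fun hq => ?_, Or.inl ⟨⟨rfl, rfl⟩, rfl, rfl, hxy⟩⟩
  have := congrArg (fun p : PV => p.1.1.1) hq
  simp at this

/-- `Δ = K₃,₃ ×_ψ AC₆` is bipartite, connected, 1-arc transitive, but not
complete bipartite. -/
theorem delta_properties :
    (∀ a b : PV, PAdj a b → a.1.1.1 = 0 ∧ b.1.1.1 = 1) ∧
    (SimpleGraph.fromRel PAdj).Connected ∧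
    ((∃ a b : PV, PAdj a b) ∧
      ∀ a b c d : PV, PAdj a b → PAdj c d →
        ∃ f : PV ≃ PV, IsAuto PAdj f ∧ f a = c ∧ f b = d) ∧
    ¬ (∀ a b : PV, a.1.1.1 = 0 → b.1.1.1 = 1 → PAdj a b) := by
  refine ⟨fun a b hab => ⟨hab.1.1, hab.1.2⟩, ?_, ⟨?_, ?_⟩, ?_⟩
  · -- connected
    have side1 : ∀ (b : Fin 3) (y : SignType),
        (SimpleGraph.fromRel PAdj).Reachable ⟨((1,b),(1,y)), rfl⟩ ⟨((0,0),(0,1)), rfl⟩ := by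
      intro b y
      cases y with
      | neg =>
        have e1 := adj01 0 b 0 (-1) (by decide)
        have e2 := adj01 0 0 0 1 (by decide)
        have e3 := adj01 0 0 1 1 (by decide)
        exact e1.symm.reachable.trans (e2.reachable.trans e3.symm.reachable)
      | zero => exact (adj01 0 b 1 0 (by decide)).symm.reachable
      | pos => exact (adj01 0 b 1 1 (by decide)).symm.reachable
    have hub : ∀ w : PV, (SimpleGraph.fromRel PAdj).Reachable w ⟨((0,0),(0,1)), rfl⟩ := by
      rintro ⟨⟨⟨i,a⟩,⟨j,x⟩⟩,h⟩
      simp only at h; subst h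
      fin_cases i
      · cases x with
        | neg => exact (adj01 a 0 (-1) (-1) (by decide)).reachable.trans (side1 0 (-1))
        | zero => exact (adj01 a 0 0 1 (by decide)).reachable.trans (side1 0 1)
        | pos => exact (adj01 a 0 1 1 (by decide)).reachable.trans (side1 0 1)
      · exact side1 a x
    haveI : Nonempty PV := ⟨⟨((0,0),(0,1)), rfl⟩⟩
    exact ⟨fun u v => (hub u).trans (hub v).symm⟩
  · exact ⟨⟨((0,0),(0,1)), rfl⟩, ⟨((1,0),(1,1)), rfl⟩, ⟨rfl, rfl⟩, rfl, rfl, by decide⟩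
  · -- 1-arc transitive
    have pex : ∀ p q p' q' : SignType, p ≠ q → p' ≠ q' →
        ∃ τ : Equiv.Perm SignType, τ p = p' ∧ τ q = q' := by decide
    have nel : ∀ x y : SignType, (x:ℤ) + (y:ℤ) ≠ 0 → x ≠ -y := by decide
    rintro ⟨⟨⟨ia,aa⟩,⟨ja,xa⟩⟩,ha⟩ ⟨⟨⟨ib,ab⟩,⟨jb,xb⟩⟩,hb⟩
      ⟨⟨⟨ic,ac⟩,⟨jc,xc⟩⟩,hc⟩ ⟨⟨⟨id',ad⟩,⟨jd,xd⟩⟩,hd⟩ hab hcd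
    simp only at ha hb hc hd; subst ha; subst hb; subst hc; subst hd
    obtain ⟨⟨h1,h2⟩,-,-,hs⟩ := hab
    obtain ⟨⟨h3,h4⟩,-,-,hs'⟩ := hcd
    simp only at h1 h2 h3 h4
    subst h1; subst h2; subst h3; subst h4
    obtain ⟨τ, hτ1, hτ2⟩ := pex xa (-xb) xc (-xd) (nel xa xb hs) (nel xc xd hs')
    refine ⟨fmap (Equiv.swap aa ac) (Equiv.swap ab ad) τ (negPerm τ), fmap_auto _ _ _, ?_, ?_⟩
    · apply Subtype.ext
      simp [fmap, Equiv.swap_apply_left, hτ1]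
    · apply Subtype.ext
      simp [fmap, negPerm, Equiv.swap_apply_left, hτ2]
  · intro h
    exact absurd (h ⟨((0,0),(0,1)), rfl⟩ ⟨((1,0),(1,-1)), rfl⟩ rfl rfl) (fun hp => hp.2.2.2 (by decide))
end

section
/- The digraph D on vertex set ℤ × {-1,0,1} × {-1,0,1}, with an edge from (i,x₁,y₁) to (i+1,x₂,y₂) iff (i is even and y₁+y₂ ≠ 0) or (i is odd and x₁+x₂ ≠ 0), is vertex transitive. -/
variable {V : Type*}

lemma sign_coe_inj (a b : SignType) : (a:ℤ) = (b:ℤ) ↔ a = b := by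
  constructor
  · intro h; cases a <;> cases b <;> simp_all <;> omega
  · intro h; rw [h]

lemma sign_sum_eq_zero (a b : SignType) : (a:ℤ) + (b:ℤ) = 0 ↔ a = -b := by
  cases a <;> cases b <;> simp <;> omega

lemma key1 (γ : SignType ≃ SignType) (a b : SignType) :
    ((γ a : ℤ) + -(γ (-b) : ℤ) = 0) ↔ ((a:ℤ) + (b:ℤ) = 0) := by
  rw [add_neg_eq_zero, sign_coe_inj, γ.apply_eq_iff_eq, ← sign_sum_eq_zero]

lemma key2 (γ : SignType ≃ SignType) (a b : SignType) :
    ((-(γ (-a) : ℤ)) + (γ b : ℤ) = 0) ↔ ((a:ℤ) + (b:ℤ) = 0) := by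
  rw [neg_add_eq_zero, sign_coe_inj, γ.apply_eq_iff_eq, neg_eq_iff_eq_neg,
    ← sign_sum_eq_zero]

def levelE (α β : SignType ≃ SignType) : DV ≃ DV where
  toFun x := (x.1, (if Even x.1 then α x.2.1 else -α (-x.2.1),
                    if Even x.1 then β x.2.2 else -β (-x.2.2)))
  invFun x := (x.1, (if Even x.1 then α.symm x.2.1 else -α.symm (-x.2.1),
                     if Even x.1 then β.symm x.2.2 else -β.symm (-x.2.2)))
  left_inv := by rintro ⟨i,p,q⟩; by_cases h : Even i <;> simp [h]
  right_inv := by rintro ⟨i,p,q⟩; by_cases h : Even i <;> simp [h]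

def shiftE (n : ℤ) : DV ≃ DV where
  toFun x := (x.1 + n, if Even n then x.2 else (x.2.2, x.2.1))
  invFun x := (x.1 - n, if Even n then x.2 else (x.2.2, x.2.1))
  left_inv := by rintro ⟨i,p,q⟩; by_cases h : Even n <;> simp [h]
  right_inv := by rintro ⟨i,p,q⟩; by_cases h : Even n <;> simp [h]

lemma auto_levelE (α β : SignType ≃ SignType) : IsAuto DAdj (levelE α β) := by
  rintro ⟨i,x1,y1⟩ ⟨j,x2,y2⟩
  simp only [DAdj, levelE, Equiv.coe_fn_mk]
  apply and_congr_right
  intro hj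
  subst hj
  by_cases h : Even i
  · have h2 : ¬ Even (i+1) := by simp [Int.even_add_one, h]
    have h3 : ¬ Odd i := Int.not_odd_iff_even.mpr h
    simp [h, h2, h3, key1]
  · have h2 : Even (i+1) := Int.even_add_one.mpr h
    have h3 : Odd i := Int.not_even_iff_odd.mp h
    simp [h, h2, h3, key2]

lemma auto_shiftE (n : ℤ) : IsAuto DAdj (shiftE n) := by
  rintro ⟨i,x1,y1⟩ ⟨j,x2,y2⟩
  simp only [DAdj, shiftE, Equiv.coe_fn_mk]
  have h1 : (j + n = i + n + 1) ↔ (j = i + 1) := by omega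
  rw [h1]
  apply and_congr_right
  intro hj
  by_cases h : Even n
  · have e1 : Even (i + n) ↔ Even i := by rw [Int.even_add]; simp [h]
    have e2 : Odd (i + n) ↔ Odd i := by rw [Int.odd_add]; simp [h]
    rw [e1, e2]
    simp [h]
  · have hn2 : n % 2 = 1 := Int.odd_iff.mp (Int.not_even_iff_odd.mp h)
    have e1 : Even (i + n) ↔ Odd i := by rw [Int.even_iff, Int.odd_iff]; omega
    have e2 : Odd (i + n) ↔ Even i := by rw [Int.odd_iff, Int.even_iff]; omega
    rw [e1, e2]
    simp only [if_neg h]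
    tauto

/-- The digraph `D` is vertex transitive. -/
theorem D_vertex_transitive :
    ∀ u v : DV, ∃ f : DV ≃ DV, IsAuto DAdj f ∧ f u = v := by
  rintro ⟨i,x1,y1⟩ ⟨j,x2,y2⟩
  set n := j - i with hn
  obtain ⟨x', y', hxy⟩ : ∃ x' y' : SignType,
      (shiftE n) (i, x', y') = (j, x2, y2) := by
    by_cases h : Even n
    · refine ⟨x2, y2, ?_⟩; simp [shiftE, h]; omega
    · refine ⟨y2, x2, ?_⟩; simp [shiftE, h]; omega
  obtain ⟨α, β, hab⟩ : ∃ α β : SignType ≃ SignType,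
      (levelE α β) (i, x1, y1) = (i, x', y') := by
    by_cases h : Even i
    · exact ⟨Equiv.swap x1 x', Equiv.swap y1 y', by simp [levelE, h]⟩
    · exact ⟨Equiv.swap (-x1) (-x'), Equiv.swap (-y1) (-y'), by simp [levelE, h]⟩
  refine ⟨(levelE α β).trans (shiftE n), ?_, by simp [hab, hxy]⟩
  intro u v
  rw [auto_levelE α β u v, auto_shiftE n]
  rfl
end

section
/- There exists a connected highly arc transitive digraph D with Property Z whose fibers φ^{-1}(i) are finite for all i, such that the associated digraph Δ(D) (the subgraph spanned by a reachability class of an edge) is not complete bipartite. Hence the Cameron–Praeger–Wormald conjecture is false. -/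
variable {V : Type*}

namespace CPW

abbrev Wt : Type := ℤ × ZMod 3 × ZMod 3

def Ar (u v : Wt) : Prop :=
  v.1 = u.1 + 1 ∧ (v.2.1 - u.2.2 = 0 ∨ v.2.1 - u.2.2 = 1)

def hA (P : ZMod 3 × Bool) (x : ZMod 3) : ZMod 3 := if P.2 then P.1 + 1 - x else x + P.1
def hB (P : ZMod 3 × Bool) (y : ZMod 3) : ZMod 3 := if P.2 then P.1 - y else y + P.1
def hAi (P : ZMod 3 × Bool) (x : ZMod 3) : ZMod 3 := if P.2 then P.1 + 1 - x else x - P.1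
def hBi (P : ZMod 3 × Bool) (y : ZMod 3) : ZMod 3 := if P.2 then P.1 - y else y - P.1

lemma hAi_hA : ∀ (P : ZMod 3 × Bool) (x : ZMod 3), hAi P (hA P x) = x := by decide
lemma hA_hAi : ∀ (P : ZMod 3 × Bool) (x : ZMod 3), hA P (hAi P x) = x := by decide
lemma hBi_hB : ∀ (P : ZMod 3 × Bool) (y : ZMod 3), hBi P (hB P y) = y := by decide
lemma hB_hBi : ∀ (P : ZMod 3 × Bool) (y : ZMod 3), hB P (hBi P y) = y := by decide

lemma pairEdge : ∀ (P : ZMod 3 × Bool) (x y : ZMod 3),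
    (x - y = 0 ∨ x - y = 1) ↔ (hA P x - hB P y = 0 ∨ hA P x - hB P y = 1) := by decide

def mkP (b a b' a' : ZMod 3) : ZMod 3 × Bool :=
  if a - b = a' - b' then (b' - b, false) else (b + b', true)

lemma mkP_spec : ∀ b a b' a' : ZMod 3, (a - b = 0 ∨ a - b = 1) → (a' - b' = 0 ∨ a' - b' = 1) →
    hB (mkP b a b' a') b = b' ∧ hA (mkP b a b' a') a = a' := by decide

/-- first label of `p j`, as a total function of `j : ℕ`. -/
def pAf {n : ℕ} (p : Fin (n+1) → Wt) (j : ℕ) : ZMod 3 :=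
  if h : j < n+1 then (p ⟨j, h⟩).2.1 else 0

/-- second label of `p j`. -/
def pBf {n : ℕ} (p : Fin (n+1) → Wt) (j : ℕ) : ZMod 3 :=
  if h : j < n+1 then (p ⟨j, h⟩).2.2 else 0

/-- the hexagon pair attached to the interface at integer level `i`. -/
def Pf {n : ℕ} (p q : Fin (n+1) → Wt) (i : ℤ) : ZMod 3 × Bool :=
  if i = (p 0).1 - 1 then (pAf q 0 - pAf p 0, false)
  else if (p 0).1 ≤ i ∧ i < (p 0).1 + n then
    mkP (pBf p (i - (p 0).1).toNat) (pAf p ((i - (p 0).1).toNat + 1))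
        (pBf q (i - (p 0).1).toNat) (pAf q ((i - (p 0).1).toNat + 1))
  else if i = (p 0).1 + n then (pBf q n - pBf p n, false)
  else (0, false)

/-- the automorphism carrying the arc `p` to the arc `q`. -/
def Ff {n : ℕ} (p q : Fin (n+1) → Wt) : Wt ≃ Wt where
  toFun w := (w.1 + ((q 0).1 - (p 0).1), hA (Pf p q (w.1 - 1)) w.2.1, hB (Pf p q w.1) w.2.2)
  invFun w := (w.1 - ((q 0).1 - (p 0).1),
    hAi (Pf p q (w.1 - ((q 0).1 - (p 0).1) - 1)) w.2.1,
    hBi (Pf p q (w.1 - ((q 0).1 - (p 0).1))) w.2.2)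
  left_inv w := by
    obtain ⟨i, x, y⟩ := w
    simp only
    rw [show i + ((q 0).1 - (p 0).1) - ((q 0).1 - (p 0).1) - 1 = i - 1 by ring,
        show i + ((q 0).1 - (p 0).1) - ((q 0).1 - (p 0).1) = i by ring,
        hAi_hA, hBi_hB]
  right_inv w := by
    obtain ⟨i, x, y⟩ := w
    simp only
    rw [show i - ((q 0).1 - (p 0).1) + ((q 0).1 - (p 0).1) = i by ring, hA_hAi, hB_hBi]

lemma Ff_auto {n : ℕ} (p q : Fin (n+1) → Wt) :
    ∀ u v, Ar u v ↔ Ar (Ff p q u) (Ff p q v) := by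
  intro u v
  obtain ⟨i, x, y⟩ := u
  obtain ⟨i', x', y'⟩ := v
  show Ar _ _ ↔ Ar _ _
  unfold Ar Ff
  simp only [Equiv.coe_fn_mk]
  constructor
  · rintro ⟨h1, h2⟩
    refine ⟨by rw [h1]; ring, ?_⟩
    rw [show i' - 1 = i by omega]
    exact (pairEdge _ _ _).mp h2
  · rintro ⟨h1, h2⟩
    have h1' : i' = i + 1 := by omega
    refine ⟨h1', ?_⟩
    rw [show i' - 1 = i by omega] at h2
    exact (pairEdge _ _ _).mpr h2

lemma Ff_maps {n : ℕ} (p q : Fin (n+1) → Wt) (hp : IsArc Ar p) (hq : IsArc Ar q)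
    (lp : ∀ (j : ℕ) (h : j < n+1), (p ⟨j, h⟩).1 = (p 0).1 + j)
    (lq : ∀ (j : ℕ) (h : j < n+1), (q ⟨j, h⟩).1 = (q 0).1 + j) :
    ∀ i, Ff p q (p i) = q i := by
  intro i
  obtain ⟨j, hj⟩ := i
  have hpj1 : (p ⟨j, hj⟩).1 = (p 0).1 + j := lp j hj
  have hqj1 : (q ⟨j, hj⟩).1 = (q 0).1 + j := lq j hj
  have hpjA : (p ⟨j, hj⟩).2.1 = pAf p j := by simp [pAf, hj]
  have hpjB : (p ⟨j, hj⟩).2.2 = pBf p j := by simp [pBf, hj]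
  have hqjA : (q ⟨j, hj⟩).2.1 = pAf q j := by simp [pAf, hj]
  have hqjB : (q ⟨j, hj⟩).2.2 = pBf q j := by simp [pBf, hj]
  show ((p ⟨j, hj⟩).1 + ((q 0).1 - (p 0).1), hA (Pf p q ((p ⟨j, hj⟩).1 - 1)) (p ⟨j, hj⟩).2.1,
      hB (Pf p q (p ⟨j, hj⟩).1) (p ⟨j, hj⟩).2.2) = q ⟨j, hj⟩
  rw [hpj1, hpjA, hpjB]
  have hq_eta : q ⟨j, hj⟩ = ((q ⟨j, hj⟩).1, (q ⟨j, hj⟩).2.1, (q ⟨j, hj⟩).2.2) := rfl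
  rw [hq_eta, hqj1, hqjA, hqjB]
  refine Prod.ext (by ring) (Prod.ext ?_ ?_)
  · -- first labels
    rcases j with _ | jj
    · -- j = 0 : interface ℓ - 1
      show hA (Pf p q ((p 0).1 + ((0:ℕ):ℤ) - 1)) (pAf p 0) = pAf q 0
      rw [show (p 0).1 + ((0:ℕ):ℤ) - 1 = (p 0).1 - 1 by push_cast; ring]
      unfold Pf
      rw [if_pos rfl]
      simp [hA]
    · -- j = jj + 1 : interface ℓ + jj
      show hA (Pf p q ((p 0).1 + ((jj+1:ℕ):ℤ) - 1)) (pAf p (jj+1)) = pAf q (jj+1)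
      rw [show (p 0).1 + ((jj+1:ℕ):ℤ) - 1 = (p 0).1 + (jj:ℤ) by push_cast; ring]
      have hjjn : jj < n := by omega
      unfold Pf
      rw [if_neg (by omega), if_pos (by constructor <;> omega),
          show (p 0).1 + (jj:ℤ) - (p 0).1 = (jj:ℤ) by ring, Int.toNat_natCast]
      have hep := (hp ⟨jj, hjjn⟩).2
      have heq := (hq ⟨jj, hjjn⟩).2
      simp only [Fin.castSucc_mk, Fin.succ_mk] at hep heq
      have hep' : pAf p (jj+1) - pBf p jj = 0 ∨ pAf p (jj+1) - pBf p jj = 1 := by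
        simpa [pAf, pBf, hjjn, Nat.lt_succ_of_lt hjjn] using hep
      have heq' : pAf q (jj+1) - pBf q jj = 0 ∨ pAf q (jj+1) - pBf q jj = 1 := by
        simpa [pAf, pBf, hjjn, Nat.lt_succ_of_lt hjjn] using heq
      exact (mkP_spec _ _ _ _ hep' heq').2
  · -- second labels
    by_cases hjn : j < n
    · show hB (Pf p q ((p 0).1 + (j:ℤ))) (pBf p j) = pBf q j
      unfold Pf
      rw [if_neg (by omega), if_pos (by constructor <;> omega),
          show (p 0).1 + (j:ℤ) - (p 0).1 = (j:ℤ) by ring, Int.toNat_natCast]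
      have hep := (hp ⟨j, hjn⟩).2
      have heq := (hq ⟨j, hjn⟩).2
      simp only [Fin.castSucc_mk, Fin.succ_mk] at hep heq
      have hep' : pAf p (j+1) - pBf p j = 0 ∨ pAf p (j+1) - pBf p j = 1 := by
        simpa [pAf, pBf, hjn, Nat.lt_succ_of_lt hjn] using hep
      have heq' : pAf q (j+1) - pBf q j = 0 ∨ pAf q (j+1) - pBf q j = 1 := by
        simpa [pAf, pBf, hjn, Nat.lt_succ_of_lt hjn] using heq
      exact (mkP_spec _ _ _ _ hep' heq').1
    · have hjn' : j = n := by omega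
      subst hjn'
      show hB (Pf p q ((p 0).1 + (j:ℤ))) (pBf p j) = pBf q j
      unfold Pf
      rw [if_neg (by omega), if_neg (by rintro ⟨_, h⟩; omega), if_pos rfl]
      simp [hB]


instance : ∀ u v : Wt, Decidable (Ar u v) := fun u v => by unfold Ar; infer_instance

lemma arc_level {n : ℕ} (p : Fin (n+1) → Wt) (hp : IsArc Ar p) :
    ∀ (j : ℕ) (h : j < n+1), (p ⟨j, h⟩).1 = (p 0).1 + j := by
  intro j
  induction j with
  | zero => intro h; norm_num
  | succ j ih =>
    intro h
    have hj : j < n := by omega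
    have e := (hp ⟨j, hj⟩).1
    simp only [Fin.castSucc_mk, Fin.succ_mk] at e
    rw [e, ih (by omega)]
    push_cast; ring

lemma hat : IsHAT Ar := by
  intro n
  constructor
  · refine ⟨fun i => (((i : ℕ) : ℤ), 0, 0), fun i => ⟨?_, Or.inl (by simp)⟩⟩
    show ((i.succ : ℕ) : ℤ) = ((i.castSucc : ℕ) : ℤ) + 1
    simp [Fin.val_succ, Fin.coe_castSucc]
  · intro p q hp hq
    exact ⟨Ff p q, Ff_auto p q, Ff_maps p q hp hq (arc_level p hp) (arc_level q hq)⟩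

abbrev rr : Wt → Wt → Prop := fun a b => Ar a b ∨ Ar b a

lemma conn_move (i : ℤ) (a b a'' b'' : ZMod 3) (h : b - b'' = 0 ∨ b - b'' = 1) :
    Relation.ReflTransGen rr (i, a, b) (i, a'', b'') :=
  Relation.ReflTransGen.head (b := ((i+1 : ℤ), b, 0))
    (Or.inl ⟨rfl, Or.inl (by simp)⟩)
    (Relation.ReflTransGen.single (Or.inr ⟨rfl, h⟩))

lemma conn_00 (i : ℤ) (a b : ZMod 3) :
    Relation.ReflTransGen rr (i, a, b) (i, 0, 0) := by
  rcases (by decide : ∀ b : ZMod 3, b = 0 ∨ b = 1 ∨ b = 2) b with h | h | h <;> subst h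
  · exact conn_move i a 0 0 0 (Or.inl (by decide))
  · exact conn_move i a 1 0 0 (Or.inr (by decide))
  · exact (conn_move i a 2 0 1 (Or.inr (by decide))).trans
      (conn_move i 0 1 0 0 (Or.inr (by decide)))

lemma conn_up (i : ℤ) : ∀ nn : ℕ, Relation.ReflTransGen rr (i, 0, 0) (i + (nn : ℤ), 0, 0) := by
  intro nn
  induction nn with
  | zero => simpa using Relation.ReflTransGen.refl
  | succ nn ih =>
    refine ih.trans (Relation.ReflTransGen.single (Or.inl ⟨?_, Or.inl (by simp)⟩))
    push_cast; ring

lemma rr_symm : Symmetric rr := fun _ _ h => Or.symm h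

lemma conn : ∀ u v : Wt, Relation.ReflTransGen rr u v := by
  intro u v
  obtain ⟨i, a, b⟩ := u
  obtain ⟨j, c, d⟩ := v
  have h3 : Relation.ReflTransGen rr (i, 0, 0) (j, 0, 0) := by
    rcases le_total i j with h | h
    · have := conn_up i (j - i).toNat
      rwa [show i + ((j - i).toNat : ℤ) = j by omega] at this
    · have := conn_up j (i - j).toNat
      rw [show j + ((i - j).toNat : ℤ) = i by omega] at this
      exact (@Relation.ReflTransGen.stdSymm _ rr ⟨fun _ _ h => rr_symm h⟩).symm _ _ this
  exact (conn_00 i a b).trans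
    (h3.trans ((@Relation.ReflTransGen.stdSymm _ rr ⟨fun _ _ h => rr_symm h⟩).symm _ _ (conn_00 j c d)))

end CPW

/-- There is a connected HAT digraph with Property Z and finite fibers whose
associated digraph `Δ` is not complete bipartite: the Cameron–Praeger–Wormald
conjecture fails. -/
theorem cameron_praeger_wormald_false :
    ∃ (W : Type) (A : W → W → Prop) (φ : W → ℤ),
      IsHAT A ∧ IsEpiZ A φ ∧
      (∀ i : ℤ, {v : W | φ v = i}.Finite) ∧
      (∀ u v : W, Relation.ReflTransGen (fun a b => A a b ∨ A b a) u v) ∧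
      ∃ e : W × W, A e.1 e.2 ∧
        ¬ (∀ u v u' v' : W, Reach A e (u, v) → Reach A e (u', v') →
            Reach A e (u, v')) := by
  classical
  refine ⟨CPW.Wt, CPW.Ar, fun w => w.1, CPW.hat, ?_, ?_, CPW.conn, ?_⟩
  · exact ⟨fun u v h => h.1, fun i => ⟨(i, 0, 0), rfl⟩,
      fun i => ⟨(i, 0, 0), (i + 1, 0, 0), ⟨rfl, Or.inl (by simp)⟩, rfl⟩⟩
  · intro i
    apply Set.Finite.subset ((Set.finite_univ (α := ZMod 3 × ZMod 3)).image
      (fun x => ((i, x) : CPW.Wt)))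
    rintro ⟨j, a, b⟩ hj
    have : j = i := hj
    exact ⟨(a, b), Set.mem_univ _, by rw [this]⟩
  · refine ⟨(((0 : ℤ), (0 : ZMod 3), (0 : ZMod 3)), ((1 : ℤ), (0 : ZMod 3), (0 : ZMod 3))),
      ⟨by norm_num, Or.inl (by decide)⟩, ?_⟩
    intro hcb
    have R1 : Reach CPW.Ar (((0 : ℤ), (0 : ZMod 3), (0 : ZMod 3)), ((1 : ℤ), (0 : ZMod 3), (0 : ZMod 3)))
        (((0 : ℤ), (0 : ZMod 3), (0 : ZMod 3)), ((1 : ℤ), (0 : ZMod 3), (0 : ZMod 3))) := by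
      refine ⟨1, ![(((0 : ℤ), (0 : ZMod 3), (0 : ZMod 3)), ((1 : ℤ), (0 : ZMod 3), (0 : ZMod 3)))],
        true, ⟨?_, ?_⟩, ⟨0, rfl⟩, ⟨0, rfl⟩⟩
      · intro i
        fin_cases i
        exact ⟨by norm_num, Or.inl (by decide)⟩
      · intro i h
        fin_cases i
        exact absurd h (by decide)
    have R2 : Reach CPW.Ar (((0 : ℤ), (0 : ZMod 3), (0 : ZMod 3)), ((1 : ℤ), (0 : ZMod 3), (0 : ZMod 3)))
        (((0 : ℤ), (0 : ZMod 3), (2 : ZMod 3)), ((1 : ℤ), (2 : ZMod 3), (0 : ZMod 3))) := by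
      refine ⟨3, ![(((0 : ℤ), (0 : ZMod 3), (0 : ZMod 3)), ((1 : ℤ), (0 : ZMod 3), (0 : ZMod 3))),
        (((0 : ℤ), (0 : ZMod 3), (2 : ZMod 3)), ((1 : ℤ), (0 : ZMod 3), (0 : ZMod 3))),
        (((0 : ℤ), (0 : ZMod 3), (2 : ZMod 3)), ((1 : ℤ), (2 : ZMod 3), (0 : ZMod 3)))],
        false, ⟨?_, ?_⟩, ⟨0, rfl⟩, ⟨2, rfl⟩⟩
      · intro i
        fin_cases i
        · exact ⟨by norm_num, Or.inl (by decide)⟩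
        · exact ⟨by norm_num, Or.inr (by decide)⟩
        · exact ⟨by norm_num, Or.inl (by decide)⟩
      · intro i h
        fin_cases i
        · rfl
        · rfl
        · exact absurd h (by decide)
    have R3 := hcb _ _ _ _ R1 R2
    obtain ⟨n, w, b, ⟨hw1, _⟩, _, ⟨j, hj⟩⟩ := R3
    have := hw1 j
    rw [hj] at this
    exact absurd this.2 (by decide)
end

section
/- In the digraph D on ℤ × {-1,0,1} × {-1,0,1} (edges from (i,x₁,y₁) to (i+1,x₂,y₂) iff (i even and y₁+y₂≠0) or (i odd and x₁+x₂≠0)), the map fixing all vertices except exchanging (0,0,y) ↔ (0,-1,y) and (-1,0,y) ↔ (-1,1,y) for each y ∈ {-1,0,1} is a digraph automorphism. -/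
variable {V : Type*}

/-- The permutation of `{-1,0,1}` exchanging `0` and `-1`. -/
def swapZN : SignType → SignType
  | SignType.zero => SignType.neg
  | SignType.neg => SignType.zero
  | SignType.pos => SignType.pos

/-- The permutation of `{-1,0,1}` exchanging `0` and `1`. -/
def swapZP : SignType → SignType
  | SignType.zero => SignType.pos
  | SignType.pos => SignType.zero
  | SignType.neg => SignType.neg

/-- The map exchanging `(0,0,y) ↔ (0,-1,y)` and `(-1,0,y) ↔ (-1,1,y)`
and fixing all other vertices. -/
def theta : DV → DV := fun u =>
  if u.1 = 0 then (u.1, swapZN u.2.1, u.2.2)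
  else if u.1 = -1 then (u.1, swapZP u.2.1, u.2.2)
  else u

lemma theta_invol : ∀ u : DV, theta (theta u) = u := by
  rintro ⟨i, x, y⟩
  unfold theta
  rcases eq_or_ne i 0 with h | h
  · simp only [h, if_pos rfl]
    cases x <;> rfl
  · rcases eq_or_ne i (-1) with h' | h'
    · subst h'
      simp only [if_neg h, if_pos rfl]
      cases x <;> simp [h] <;> decide
    · simp [h, h']

lemma theta_fst (u : DV) : (theta u).1 = u.1 := by
  unfold theta; split_ifs <;> rfl

lemma theta_snd (u : DV) : (theta u).2.2 = u.2.2 := by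
  unfold theta; split_ifs <;> rfl

lemma theta_x (u : DV) : (theta u).2.1 =
    if u.1 = 0 then swapZN u.2.1 else if u.1 = -1 then swapZP u.2.1 else u.2.1 := by
  unfold theta; split_ifs <;> rfl

lemma swap_sum (a b : SignType) :
    ((a : ℤ) + (b : ℤ) ≠ 0) ↔ ((swapZP a : ℤ) + (swapZN b : ℤ) ≠ 0) := by
  cases a <;> cases b <;> decide

/-- `theta` is a digraph automorphism of `D`. -/
theorem theta_is_automorphism :
    Function.Bijective theta ∧
    ∀ u v : DV, DAdj u v ↔ DAdj (theta u) (theta v) := by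
  constructor
  · exact Function.Involutive.bijective theta_invol
  · intro u v
    unfold DAdj
    rw [theta_fst, theta_fst, theta_snd, theta_snd, theta_x, theta_x]
    constructor
    · rintro ⟨h1, h2 | ⟨hodd, hx⟩⟩
      · exact ⟨h1, Or.inl h2⟩
      · refine ⟨h1, Or.inr ⟨hodd, ?_⟩⟩
        rcases eq_or_ne u.1 (-1) with h | h
        · have hv0 : v.1 = 0 := by omega
          rw [if_neg (by omega), if_pos h, if_pos hv0]
          exact (swap_sum u.2.1 v.2.1).mp hx
        · have hu0 : u.1 ≠ 0 := by intro h0; rw [h0] at hodd; exact (by decide : ¬ Odd (0:ℤ)) hodd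
          have hv0 : v.1 ≠ 0 := by
            rintro h0; rw [h0] at h1; omega
          have hv1 : v.1 ≠ -1 := by
            intro h0
            have : u.1 = -2 := by omega
            rw [this] at hodd
            exact (by decide : ¬ Odd (-2 : ℤ)) hodd
          rw [if_neg hu0, if_neg h, if_neg hv0, if_neg hv1]
          exact hx
    · rintro ⟨h1, h2 | ⟨hodd, hx⟩⟩
      · exact ⟨h1, Or.inl h2⟩
      · refine ⟨h1, Or.inr ⟨hodd, ?_⟩⟩
        rcases eq_or_ne u.1 (-1) with h | h
        · have hv0 : v.1 = 0 := by omega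
          rw [if_neg (by omega), if_pos h, if_pos hv0] at hx
          exact (swap_sum u.2.1 v.2.1).mpr hx
        · have hu0 : u.1 ≠ 0 := by rintro h0; rw [h0] at hodd; exact (by decide : ¬ Odd (0:ℤ)) hodd
          have hv0 : v.1 ≠ 0 := by omega
          have hv1 : v.1 ≠ -1 := by
            intro h0
            have : u.1 = -2 := by omega
            rw [this] at hodd
            exact (by decide : ¬ Odd (-2 : ℤ)) hodd
          rw [if_neg hu0, if_neg h, if_neg hv0, if_neg hv1] at hx
          exact hx
end

section
/- In the digraph D on ℤ × {-1,0,1} × {-1,0,1} (edges from (i,x₁,y₁) to (i+1,x₂,y₂) iff (i even and y₁+y₂≠0) or (i odd and x₁+x₂≠0)), the map fixing all vertices except exchanging (0,x,0) ↔ (0,x,1) and (1,x,-1) ↔ (1,x,0) for each x ∈ {-1,0,1} is a digraph automorphism, and it maps the edge ((0,-1,-1),(1,x,0)) to ((0,-1,-1),(1,x,-1)) while fixing every vertex (i,-1,-1) with i ≤ 0. -/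
variable {V : Type*}

/-- The map exchanging `(0,x,0) ↔ (0,x,1)` and `(1,x,-1) ↔ (1,x,0)`
and fixing all other vertices. -/
def alpha : DV → DV := fun u =>
  if u.1 = 0 then (u.1, u.2.1, swapZP u.2.2)
  else if u.1 = 1 then (u.1, u.2.1, swapZN u.2.2)
  else u


lemma alpha_invol : ∀ u : DV, alpha (alpha u) = u := by
  rintro ⟨i, x, y⟩
  unfold alpha
  by_cases h0 : i = 0
  · subst h0; cases y <;> simp [swapZP]
  · by_cases h1 : i = 1
    · subst h1; cases y <;> simp [swapZN]
    · simp [h0, h1]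

lemma alpha_fst (u : DV) : (alpha u).1 = u.1 := by
  unfold alpha; split <;> [rfl; skip]; split <;> rfl

lemma alpha_x (u : DV) : (alpha u).2.1 = u.2.1 := by
  unfold alpha; split <;> [rfl; skip]; split <;> rfl

lemma alpha_y_of_ne (u : DV) (h0 : u.1 ≠ 0) (h1 : u.1 ≠ 1) :
    (alpha u).2.2 = u.2.2 := by
  unfold alpha; simp [h0, h1]

/-- `alpha` is a digraph automorphism of `D`, it maps the edge
`((0,-1,-1),(1,x,0))` to `((0,-1,-1),(1,x,-1))`, and it fixes every vertex
`(i,-1,-1)` with `i ≤ 0`. -/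
theorem alpha_is_automorphism :
    (Function.Bijective alpha ∧
      ∀ u v : DV, DAdj u v ↔ DAdj (alpha u) (alpha v)) ∧
    (∀ x : SignType,
      alpha (1, x, SignType.zero) = (1, x, SignType.neg)) ∧
    (∀ i : ℤ, i ≤ 0 → alpha (i, SignType.neg, SignType.neg)
      = (i, SignType.neg, SignType.neg)) := by
  refine ⟨⟨Function.Involutive.bijective alpha_invol, ?_⟩, ?_, ?_⟩
  · rintro ⟨i, x, y⟩ ⟨j, a, b⟩
    unfold DAdj
    have hf1 : (alpha (i, x, y)).1 = i := alpha_fst _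
    have hf2 : (alpha (j, a, b)).1 = j := alpha_fst _
    have hx1 : (alpha (i, x, y)).2.1 = x := alpha_x _
    have hx2 : (alpha (j, a, b)).2.1 = a := alpha_x _
    rw [hf1, hf2, hx1, hx2]
    by_cases hj : j = i + 1
    · subst hj
      simp only [true_and, eq_self_iff_true]
      by_cases hi : i = 0
      · subst hi
        have h1 : (alpha ((0:ℤ), x, y)).2.2 = swapZP y := by unfold alpha; simp
        have h2 : (alpha ((0:ℤ)+1, a, b)).2.2 = swapZN b := by
          unfold alpha; norm_num
        rw [h1, h2]
        constructor
        · rintro (⟨he, hy⟩ | ⟨ho, _⟩)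
          · exact Or.inl ⟨he, by cases y <;> cases b <;> revert hy <;> decide⟩
          · exact absurd ho (by decide)
        · rintro (⟨he, hy⟩ | ⟨ho, _⟩)
          · exact Or.inl ⟨he, by cases y <;> cases b <;> revert hy <;> decide⟩
          · exact absurd ho (by decide)
      · by_cases hpar : Even i
        · -- i even, i ≠ 0, so i ≠ 1 and i+1 ≠ 0, i+1 ≠ 1
          have hi1 : i ≠ 1 := by rintro rfl; exact (by decide : ¬ Even (1:ℤ)) hpar
          have hj0 : i + 1 ≠ 0 := by
            intro h; rw [Int.even_iff] at hpar; omega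
          have hj1 : i + 1 ≠ 1 := by omega
          rw [alpha_y_of_ne (i, x, y) hi hi1, alpha_y_of_ne (i+1, a, b) hj0 hj1]
        · -- i odd: y-coordinates irrelevant
          have hodd : Odd i := Int.not_even_iff_odd.mp hpar
          constructor
          · rintro (⟨he, _⟩ | ⟨_, hx⟩)
            · exact absurd he hpar
            · exact Or.inr ⟨hodd, hx⟩
          · rintro (⟨he, _⟩ | ⟨_, hx⟩)
            · exact absurd he hpar
            · exact Or.inr ⟨hodd, hx⟩
    · simp [hj]
  · intro x
    unfold alpha
    norm_num [swapZN]
  · intro i hi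
    unfold alpha
    by_cases h0 : i = 0
    · subst h0; simp [swapZP]
    · have h1 : i ≠ 1 := by omega
      simp [h0, h1]
end

section
/- Let G¹, G² be highly arc transitive digraphs with Property Z via φ¹, φ². Then their layerwise direct product G¹ ×_{φ¹,φ²} G² is highly arc transitive and has Property Z; moreover if both φ¹ and φ² have finite fibers, so does the resulting epimorphism on the product. -/
variable {V : Type*}

namespace LW

def Conn (A : V → V → Prop) : V → V → Prop :=
  Relation.EqvGen (fun u v => A u v ∨ A v u)

theorem Conn.refl (A : V → V → Prop) (x : V) : Conn A x x := Relation.EqvGen.refl x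

theorem Conn.symm {A : V → V → Prop} {x y : V} (h : Conn A x y) : Conn A y x :=
  Relation.EqvGen.symm _ _ h

theorem Conn.trans {A : V → V → Prop} {x y z : V} (h : Conn A x y) (h2 : Conn A y z) :
    Conn A x z := Relation.EqvGen.trans _ _ _ h h2

theorem Conn.of_edge {A : V → V → Prop} {x y : V} (h : A x y) : Conn A x y :=
  Relation.EqvGen.rel _ _ (Or.inl h)

theorem conn_map {A : V → V → Prop} (F : V → V) (a : V)
    (hF : ∀ x y, Conn A a x → Conn A a y → A x y → A (F x) (F y)) :
    ∀ x, Conn A a x → Conn A (F a) (F x) := by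
  have key : ∀ x y, Conn A x y → Conn A a x → Conn A a y → Conn A (F x) (F y) := by
    intro x y h
    induction h with
    | rel x y hxy =>
      intro hx hy
      rcases hxy with h | h
      · exact Conn.of_edge (hF _ _ hx hy h)
      · exact (Conn.of_edge (hF _ _ hy hx h)).symm
    | refl x => intro _ _; exact Conn.refl A _
    | symm x y h ih => intro hx hy; exact (ih hy hx).symm
    | trans x y z h1 h2 ih1 ih2 =>
      intro hx hz
      have hy : Conn A a y := hx.trans h1
      exact (ih1 hx hy).trans (ih2 hy hz)
  intro x hx
  exact key a x hx (Conn.refl A a) hx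

theorem shift_const {A : V → V → Prop} {φ : V → ℤ} (hA : ∀ u v, A u v → φ v = φ u + 1)
    {f : V → V} (hf : ∀ u v, A u v → A (f u) (f v)) :
    ∀ {x y}, Conn A x y → φ (f x) - φ x = φ (f y) - φ y := by
  intro x y h
  induction h with
  | rel x y hxy =>
    rcases hxy with h | h
    · rw [hA _ _ h, hA _ _ (hf _ _ h)]; ring
    · rw [hA _ _ h, hA _ _ (hf _ _ h)]; ring
  | refl x => rfl
  | symm _ _ _ ih => exact ih.symm
  | trans _ _ _ _ _ ih1 ih2 => exact ih1.trans ih2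

theorem autoSymm {A : V → V → Prop} {f : V ≃ V} (hf : IsAuto A f) : IsAuto A f.symm := by
  intro u v
  have := (hf (f.symm u) (f.symm v)).symm
  simpa using this

theorem autoTrans {A : V → V → Prop} {f g : V ≃ V} (hf : IsAuto A f) (hg : IsAuto A g) :
    IsAuto A (f.trans g) := fun u v => (hf u v).trans (hg _ _)

/-- Component transplant: extend compatible partial maps on the components of `a` and `F a`
to a global automorphism. -/
theorem transplant {B : V → V → Prop} (F G : V → V) (a : V)
    (hi : ∀ x, Conn B a x → Conn B (F a) (F x))
    (hii : ∀ x, Conn B (F a) x → Conn B a (G x))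
    (hiii : ∀ x, Conn B a x → G (F x) = x)
    (hiv : ∀ x, Conn B (F a) x → F (G x) = x)
    (hv : ∀ x y, Conn B a x → Conn B a y → (B x y ↔ B (F x) (F y)))
    (hvi : ∀ x y, Conn B (F a) x → Conn B (F a) y → (B x y ↔ B (G x) (G y))) :
    ∃ g : V ≃ V, IsAuto B g ∧ (∀ x, Conn B a x → g x = F x) ∧
      (∀ x, ¬ Conn B a x → Conn B (F a) x → g x = G x) ∧
      (∀ x, ¬ Conn B a x → ¬ Conn B (F a) x → g x = x) := by
  classical
  set P : V → Prop := fun x => Conn B a x with hP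
  set Q : V → Prop := fun x => Conn B (F a) x with hQ
  -- if the two components coincide, P = Q
  have hsame : ∀ x, P x → Q x → ∀ y, (P y ↔ Q y) := by
    intro x hPx hQx y
    have hc : Conn B a (F a) := hPx.trans hQx.symm
    exact ⟨fun h => hc.symm.trans h, fun h => hc.trans h⟩
  let g : V → V := fun x => if P x then F x else if Q x then G x else x
  let h : V → V := fun x => if Q x then G x else if P x then F x else x
  have hgP : ∀ x, P x → g x = F x := by intro x hx; simp only [g, if_pos hx]
  have hgQ : ∀ x, ¬ P x → Q x → g x = G x := by
    intro x hx hq; simp only [g, if_neg hx, if_pos hq]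
  have hgE : ∀ x, ¬ P x → ¬ Q x → g x = x := by
    intro x hx hq; simp only [g, if_neg hx, if_neg hq]
  have hhQ : ∀ x, Q x → h x = G x := by intro x hx; simp only [h, if_pos hx]
  have hhP : ∀ x, ¬ Q x → P x → h x = F x := by
    intro x hx hp; simp only [h, if_neg hx, if_pos hp]
  have hhE : ∀ x, ¬ Q x → ¬ P x → h x = x := by
    intro x hx hp; simp only [h, if_neg hx, if_neg hp]
  have left : ∀ x, h (g x) = x := by
    intro x
    by_cases hPx : P x
    · rw [hgP x hPx, hhQ _ (hi x hPx), hiii x hPx]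
    · by_cases hQx : Q x
      · rw [hgQ x hPx hQx]
        have hPGx : P (G x) := hii x hQx
        have hQGx : ¬ Q (G x) := by
          intro hq
          exact hPx ((hsame _ hPGx hq x).mpr hQx)
        rw [hhP _ hQGx hPGx, hiv x hQx]
      · rw [hgE x hPx hQx, hhE x hQx hPx]
  have right : ∀ x, g (h x) = x := by
    intro x
    by_cases hQx : Q x
    · rw [hhQ x hQx, hgP _ (hii x hQx), hiv x hQx]
    · by_cases hPx : P x
      · rw [hhP x hQx hPx]
        have hQFx : Q (F x) := hi x hPx
        have hPFx : ¬ P (F x) := by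
          intro hp
          exact hQx ((hsame _ hp hQFx x).mp hPx)
        rw [hgQ _ hPFx hQFx, hiii x hPx]
      · rw [hhE x hQx hPx, hgE x hPx hQx]
  have hconnPQ : ∀ u v, B u v → (P u ↔ P v) ∧ (Q u ↔ Q v) := by
    intro u v huv
    have hc : Conn B u v := Conn.of_edge huv
    exact ⟨⟨fun h => h.trans hc, fun h => h.trans hc.symm⟩,
      ⟨fun h => h.trans hc, fun h => h.trans hc.symm⟩⟩
  have hgfwd : ∀ u v, B u v → B (g u) (g v) := by
    intro u v huv
    obtain ⟨hPuv, hQuv⟩ := hconnPQ u v huv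
    by_cases hPu : P u
    · have hPv : P v := hPuv.mp hPu
      rw [hgP u hPu, hgP v hPv]
      exact (hv u v hPu hPv).mp huv
    · have hPv : ¬ P v := fun h => hPu (hPuv.mpr h)
      by_cases hQu : Q u
      · have hQv : Q v := hQuv.mp hQu
        rw [hgQ u hPu hQu, hgQ v hPv hQv]
        exact (hvi u v hQu hQv).mp huv
      · have hQv : ¬ Q v := fun h => hQu (hQuv.mpr h)
        rw [hgE u hPu hQu, hgE v hPv hQv]
        exact huv
  have hhfwd : ∀ u v, B u v → B (h u) (h v) := by
    intro u v huv
    obtain ⟨hPuv, hQuv⟩ := hconnPQ u v huv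
    by_cases hQu : Q u
    · have hQv : Q v := hQuv.mp hQu
      rw [hhQ u hQu, hhQ v hQv]
      exact (hvi u v hQu hQv).mp huv
    · have hQv : ¬ Q v := fun h => hQu (hQuv.mpr h)
      by_cases hPu : P u
      · have hPv : P v := hPuv.mp hPu
        rw [hhP u hQu hPu, hhP v hQv hPv]
        exact (hv u v hPu hPv).mp huv
      · have hPv : ¬ P v := fun h => hPu (hPuv.mpr h)
        rw [hhE u hQu hPu, hhE v hQv hPv]
        exact huv
  refine ⟨⟨g, h, left, right⟩, ?_, hgP, hgQ, hgE⟩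
  intro u v
  simp only [Equiv.coe_fn_mk]
  constructor
  · exact hgfwd u v
  · intro hB
    have := hhfwd _ _ hB
    rwa [left, left] at this

theorem levelfix {A : V → V → Prop} {φ : V → ℤ} (hA : ∀ u v, A u v → φ v = φ u + 1)
    {f : V ≃ V} (hf : IsAuto A f) (a : V) (ha : φ (f a) = φ a) :
    ∃ g : V ≃ V, IsAuto A g ∧ (∀ x, Conn A a x → g x = f x) ∧ (∀ x, φ (g x) = φ x) := by
  have hfwd : ∀ u v, A u v → A (f u) (f v) := fun u v h => (hf u v).mp h
  have hbwd : ∀ u v, A u v → A (f.symm u) (f.symm v) :=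
    fun u v h => (autoSymm hf u v).mp h
  obtain ⟨g, hg, hg1, hg2, hg3⟩ := transplant (B := A) (⇑f) (⇑f.symm) a
    (conn_map _ a (fun x y _ _ h => hfwd x y h))
    (fun x hx => by
      have := conn_map (A := A) (⇑f.symm) (f a) (fun x y _ _ h => hbwd x y h) x hx
      simpa using this)
    (fun x _ => f.symm_apply_apply x)
    (fun x _ => f.apply_symm_apply x)
    (fun x y _ _ => hf x y)
    (fun x y _ _ => autoSymm hf x y)
  refine ⟨g, hg, hg1, ?_⟩
  intro x
  by_cases hPx : Conn A a x
  · rw [hg1 x hPx]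
    have := shift_const hA hfwd hPx
    rw [ha] at this
    omega
  · by_cases hQx : Conn A (f a) x
    · rw [hg2 x hPx hQx]
      have := shift_const hA hbwd hQx
      rw [f.symm_apply_apply, ha] at this
      omega
    · rw [hg3 x hPx hQx]

theorem arc_conn {A : V → V → Prop} {n : ℕ} {p : Fin (n + 1) → V} (hp : IsArc A p)
    (i : Fin (n + 1)) : Conn A (p 0) (p i) := by
  obtain ⟨k, hk⟩ := i
  induction k with
  | zero =>
    have h0 : (⟨0, hk⟩ : Fin (n + 1)) = 0 := by ext; simp
    rw [h0]
    exact Conn.refl A _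
  | succ k ih =>
    have hk' : k < n + 1 := Nat.lt_of_succ_lt hk
    have hkn : k < n := Nat.lt_of_succ_lt_succ hk
    have edge := hp ⟨k, hkn⟩
    exact (ih hk').trans (Conn.of_edge edge)

theorem arc_level {A : V → V → Prop} {φ : V → ℤ} (hA : ∀ u v, A u v → φ v = φ u + 1)
    {n : ℕ} {p : Fin (n + 1) → V} (hp : IsArc A p) (i : Fin (n + 1)) :
    φ (p i) = φ (p 0) + (i : ℕ) := by
  obtain ⟨k, hk⟩ := i
  induction k with
  | zero =>
    have h0 : (⟨0, hk⟩ : Fin (n + 1)) = 0 := by ext; simp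
    rw [h0]; simp
  | succ k ih =>
    have hk' : k < n + 1 := Nat.lt_of_succ_lt hk
    have hkn : k < n := Nat.lt_of_succ_lt_succ hk
    have edge := hp ⟨k, hkn⟩
    have := hA _ _ edge
    have ihk := ih hk'
    have hcast : (⟨k, hkn⟩ : Fin n).castSucc = ⟨k, hk'⟩ := rfl
    have hsucc : (⟨k, hkn⟩ : Fin n).succ = ⟨k + 1, hk⟩ := rfl
    rw [hcast, hsucc] at this
    rw [this, ihk]
    push_cast
    ring

theorem vertex_trans {A : V → V → Prop} (hH : IsHAT A) (u v : V) :
    ∃ f : V ≃ V, IsAuto A f ∧ f u = v := by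
  obtain ⟨f, hf, hfi⟩ := (hH 0).2 (fun _ => u) (fun _ => v)
    (fun i => i.elim0) (fun i => i.elim0)
  exact ⟨f, hf, hfi 0⟩


section Product

variable {V₁ V₂ : Type*}

abbrev PA (A₁ : V₁ → V₁ → Prop) (A₂ : V₂ → V₂ → Prop) (φ₁ : V₁ → ℤ) (φ₂ : V₂ → ℤ) :
    {p : V₁ × V₂ // φ₁ p.1 = φ₂ p.2} → {p : V₁ × V₂ // φ₁ p.1 = φ₂ p.2} → Prop :=
  fun p q => A₁ p.1.1 q.1.1 ∧ A₂ p.1.2 q.1.2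

variable {A₁ : V₁ → V₁ → Prop} {A₂ : V₂ → V₂ → Prop} {φ₁ : V₁ → ℤ} {φ₂ : V₂ → ℤ}

theorem conn_proj1 {a t : {p : V₁ × V₂ // φ₁ p.1 = φ₂ p.2}}
    (h : Conn (PA A₁ A₂ φ₁ φ₂) a t) : Conn A₁ a.1.1 t.1.1 := by
  induction h with
  | rel x y hxy =>
    rcases hxy with h | h
    · exact Conn.of_edge h.1
    · exact (Conn.of_edge h.1).symm
  | refl => exact Conn.refl _ _
  | symm _ _ _ ih => exact ih.symm
  | trans _ _ _ _ _ ih1 ih2 => exact ih1.trans ih2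

theorem conn_proj2 {a t : {p : V₁ × V₂ // φ₁ p.1 = φ₂ p.2}}
    (h : Conn (PA A₁ A₂ φ₁ φ₂) a t) : Conn A₂ a.1.2 t.1.2 := by
  induction h with
  | rel x y hxy =>
    rcases hxy with h | h
    · exact Conn.of_edge h.2
    · exact (Conn.of_edge h.2).symm
  | refl => exact Conn.refl _ _
  | symm _ _ _ ih => exact ih.symm
  | trans _ _ _ _ _ ih1 ih2 => exact ih1.trans ih2

/-- Same-level transitivity in the layerwise product. -/
theorem stepA (hH₁ : IsHAT A₁) (hH₂ : IsHAT A₂)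
    (hZ₁ : IsEpiZ A₁ φ₁) (hZ₂ : IsEpiZ A₂ φ₂)
    {n : ℕ} (p q : Fin (n + 1) → {p : V₁ × V₂ // φ₁ p.1 = φ₂ p.2})
    (hp : IsArc (PA A₁ A₂ φ₁ φ₂) p) (hq : IsArc (PA A₁ A₂ φ₁ φ₂) q)
    (hlev : φ₁ (p 0).1.1 = φ₁ (q 0).1.1) :
    ∃ f : {p : V₁ × V₂ // φ₁ p.1 = φ₂ p.2} ≃ {p : V₁ × V₂ // φ₁ p.1 = φ₂ p.2},
      IsAuto (PA A₁ A₂ φ₁ φ₂) f ∧ ∀ i, f (p i) = q i := by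
  have hp1 : IsArc A₁ (fun i => (p i).1.1) := fun i => (hp i).1
  have hp2 : IsArc A₂ (fun i => (p i).1.2) := fun i => (hp i).2
  have hq1 : IsArc A₁ (fun i => (q i).1.1) := fun i => (hq i).1
  have hq2 : IsArc A₂ (fun i => (q i).1.2) := fun i => (hq i).2
  obtain ⟨f₁, hf₁, hf₁i⟩ := (hH₁ n).2 _ _ hp1 hq1
  obtain ⟨f₂, hf₂, hf₂i⟩ := (hH₂ n).2 _ _ hp2 hq2
  have ha1 : φ₁ (f₁ ((p 0).1.1)) = φ₁ ((p 0).1.1) := by rw [hf₁i 0]; exact hlev.symm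
  have ha2 : φ₂ (f₂ ((p 0).1.2)) = φ₂ ((p 0).1.2) := by
    rw [hf₂i 0]
    have e1 := (q 0).2
    have e2 := (p 0).2
    omega
  obtain ⟨g₁, hg₁, hg₁c, hg₁φ⟩ := levelfix hZ₁.1 hf₁ ((p 0).1.1) ha1
  obtain ⟨g₂, hg₂, hg₂c, hg₂φ⟩ := levelfix hZ₂.1 hf₂ ((p 0).1.2) ha2
  have hg₁φ' : ∀ x, φ₁ (g₁.symm x) = φ₁ x := by
    intro x
    have := hg₁φ (g₁.symm x)
    rw [g₁.apply_symm_apply] at this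
    exact this.symm
  have hg₂φ' : ∀ y, φ₂ (g₂.symm y) = φ₂ y := by
    intro y
    have := hg₂φ (g₂.symm y)
    rw [g₂.apply_symm_apply] at this
    exact this.symm
  refine ⟨⟨fun t => ⟨(g₁ t.1.1, g₂ t.1.2), by rw [hg₁φ, hg₂φ]; exact t.2⟩,
          fun t => ⟨(g₁.symm t.1.1, g₂.symm t.1.2), by rw [hg₁φ', hg₂φ']; exact t.2⟩,
          fun t => Subtype.ext (Prod.ext (by simp) (by simp)),
          fun t => Subtype.ext (Prod.ext (by simp) (by simp))⟩, ?_, ?_⟩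
  · intro u v
    exact and_congr (hg₁ u.1.1 v.1.1) (hg₂ u.1.2 v.1.2)
  · intro i
    apply Subtype.ext
    have c1 : Conn A₁ ((p 0).1.1) ((p i).1.1) := arc_conn hp1 i
    have c2 : Conn A₂ ((p 0).1.2) ((p i).1.2) := arc_conn hp2 i
    have h1 : g₁ ((p i).1.1) = (q i).1.1 := by rw [hg₁c _ c1]; exact hf₁i i
    have h2 : g₂ ((p i).1.2) = (q i).1.2 := by rw [hg₂c _ c2]; exact hf₂i i
    simp only [Equiv.coe_fn_mk]
    exact Prod.ext h1 h2

/-- Level shifting: any arc of the product can be moved by a product automorphism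
to an arc starting at any prescribed level. -/
theorem stepB (hH₁ : IsHAT A₁) (hH₂ : IsHAT A₂)
    (hZ₁ : IsEpiZ A₁ φ₁) (hZ₂ : IsEpiZ A₂ φ₂)
    {n : ℕ} (q : Fin (n + 1) → {p : V₁ × V₂ // φ₁ p.1 = φ₂ p.2})
    (hq : IsArc (PA A₁ A₂ φ₁ φ₂) q) (ℓ : ℤ) :
    ∃ (H : {p : V₁ × V₂ // φ₁ p.1 = φ₂ p.2} ≃ {p : V₁ × V₂ // φ₁ p.1 = φ₂ p.2})
      (r : Fin (n + 1) → {p : V₁ × V₂ // φ₁ p.1 = φ₂ p.2}),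
      IsAuto (PA A₁ A₂ φ₁ φ₂) H ∧ IsArc (PA A₁ A₂ φ₁ φ₂) r ∧
      φ₁ (r 0).1.1 = ℓ ∧ ∀ i, H (q i) = r i := by
  classical
  obtain ⟨u₁, hu₁⟩ := hZ₁.2.1 ℓ
  obtain ⟨u₂, hu₂⟩ := hZ₂.2.1 ℓ
  obtain ⟨f₁, hf₁, hf₁a⟩ := vertex_trans hH₁ ((q 0).1.1) u₁
  obtain ⟨f₂, hf₂, hf₂a⟩ := vertex_trans hH₂ ((q 0).1.2) u₂
  have hf₁fwd : ∀ u v, A₁ u v → A₁ (f₁ u) (f₁ v) := fun u v h => (hf₁ u v).mp h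
  have hf₂fwd : ∀ u v, A₂ u v → A₂ (f₂ u) (f₂ v) := fun u v h => (hf₂ u v).mp h
  have hf₁bwd : ∀ u v, A₁ u v → A₁ (f₁.symm u) (f₁.symm v) :=
    fun u v h => (autoSymm hf₁ u v).mp h
  have hf₂bwd : ∀ u v, A₂ u v → A₂ (f₂.symm u) (f₂.symm v) :=
    fun u v h => (autoSymm hf₂ u v).mp h
  have hq02 := (q 0).2
  -- shifts on the relevant components
  have shift₁ : ∀ x, Conn A₁ ((q 0).1.1) x →
      φ₁ (f₁ x) = φ₁ x + (ℓ - φ₁ ((q 0).1.1)) := by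
    intro x hx
    have := shift_const hZ₁.1 hf₁fwd hx
    rw [hf₁a, hu₁] at this
    omega
  have shift₂ : ∀ y, Conn A₂ ((q 0).1.2) y →
      φ₂ (f₂ y) = φ₂ y + (ℓ - φ₁ ((q 0).1.1)) := by
    intro y hy
    have := shift_const hZ₂.1 hf₂fwd hy
    rw [hf₂a, hu₂] at this
    omega
  have shift₁' : ∀ x, Conn A₁ (f₁ ((q 0).1.1)) x →
      φ₁ (f₁.symm x) = φ₁ x - (ℓ - φ₁ ((q 0).1.1)) := by
    intro x hx
    have := shift_const hZ₁.1 hf₁bwd hx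
    rw [f₁.symm_apply_apply, hf₁a, hu₁] at this
    omega
  have shift₂' : ∀ y, Conn A₂ (f₂ ((q 0).1.2)) y →
      φ₂ (f₂.symm y) = φ₂ y - (ℓ - φ₁ ((q 0).1.1)) := by
    intro y hy
    have := shift_const hZ₂.1 hf₂bwd hy
    rw [f₂.symm_apply_apply, hf₂a, hu₂] at this
    omega
  -- total maps on the product
  set F : {p : V₁ × V₂ // φ₁ p.1 = φ₂ p.2} → {p : V₁ × V₂ // φ₁ p.1 = φ₂ p.2} :=
    fun t => if h : φ₁ (f₁ t.1.1) = φ₂ (f₂ t.1.2) then ⟨(f₁ t.1.1, f₂ t.1.2), h⟩ else t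
    with hF
  set G : {p : V₁ × V₂ // φ₁ p.1 = φ₂ p.2} → {p : V₁ × V₂ // φ₁ p.1 = φ₂ p.2} :=
    fun t => if h : φ₁ (f₁.symm t.1.1) = φ₂ (f₂.symm t.1.2) then
      ⟨(f₁.symm t.1.1, f₂.symm t.1.2), h⟩ else t
    with hG
  have FonC : ∀ t, Conn (PA A₁ A₂ φ₁ φ₂) (q 0) t →
      ∃ h, F t = ⟨(f₁ t.1.1, f₂ t.1.2), h⟩ := by
    intro t ht
    have h1 : φ₁ (f₁ t.1.1) = φ₂ (f₂ t.1.2) := by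
      rw [shift₁ _ (conn_proj1 ht), shift₂ _ (conn_proj2 ht), t.2]
    refine ⟨h1, ?_⟩
    simp only [hF]
    rw [dif_pos h1]
  obtain ⟨hFa1, hFa2⟩ := FonC (q 0) (Conn.refl _ (q 0))
  have GonC : ∀ t, Conn (PA A₁ A₂ φ₁ φ₂) (F (q 0)) t →
      ∃ h, G t = ⟨(f₁.symm t.1.1, f₂.symm t.1.2), h⟩ := by
    intro t ht
    rw [hFa2] at ht
    have c1 : Conn A₁ (f₁ ((q 0).1.1)) t.1.1 := conn_proj1 ht
    have c2 : Conn A₂ (f₂ ((q 0).1.2)) t.1.2 := conn_proj2 ht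
    have h1 : φ₁ (f₁.symm t.1.1) = φ₂ (f₂.symm t.1.2) := by
      rw [shift₁' _ c1, shift₂' _ c2, t.2]
    refine ⟨h1, ?_⟩
    simp only [hG]
    rw [dif_pos h1]
  -- transplant hypotheses
  have hiii : ∀ t, Conn (PA A₁ A₂ φ₁ φ₂) (q 0) t → G (F t) = t := by
    intro t ht
    obtain ⟨h1, h2⟩ := FonC t ht
    rw [h2]
    simp only [hG]
    have hcond : φ₁ (f₁.symm (f₁ t.1.1)) = φ₂ (f₂.symm (f₂ t.1.2)) := by
      rw [f₁.symm_apply_apply, f₂.symm_apply_apply]; exact t.2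
    rw [dif_pos hcond]
    exact Subtype.ext (Prod.ext (f₁.symm_apply_apply _) (f₂.symm_apply_apply _))
  have hi : ∀ t, Conn (PA A₁ A₂ φ₁ φ₂) (q 0) t →
      Conn (PA A₁ A₂ φ₁ φ₂) (F (q 0)) (F t) := by
    apply conn_map
    intro x y hx hy hxy
    obtain ⟨hx1, hx2⟩ := FonC x hx
    obtain ⟨hy1, hy2⟩ := FonC y hy
    rw [hx2, hy2]
    exact ⟨hf₁fwd _ _ hxy.1, hf₂fwd _ _ hxy.2⟩
  have hiv : ∀ t, Conn (PA A₁ A₂ φ₁ φ₂) (F (q 0)) t → F (G t) = t := by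
    intro t ht
    obtain ⟨h1, h2⟩ := GonC t ht
    rw [h2]
    simp only [hF]
    have hcond : φ₁ (f₁ (f₁.symm t.1.1)) = φ₂ (f₂ (f₂.symm t.1.2)) := by
      rw [f₁.apply_symm_apply, f₂.apply_symm_apply]; exact t.2
    rw [dif_pos hcond]
    exact Subtype.ext (Prod.ext (f₁.apply_symm_apply _) (f₂.apply_symm_apply _))
  have hii : ∀ t, Conn (PA A₁ A₂ φ₁ φ₂) (F (q 0)) t →
      Conn (PA A₁ A₂ φ₁ φ₂) (q 0) (G t) := by
    intro t ht
    have := conn_map (A := PA A₁ A₂ φ₁ φ₂) G (F (q 0)) ?_ t ht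
    · rwa [hiii (q 0) (Conn.refl _ (q 0))] at this
    · intro x y hx hy hxy
      obtain ⟨hx1, hx2⟩ := GonC x hx
      obtain ⟨hy1, hy2⟩ := GonC y hy
      rw [hx2, hy2]
      exact ⟨hf₁bwd _ _ hxy.1, hf₂bwd _ _ hxy.2⟩
  have hv : ∀ x y, Conn (PA A₁ A₂ φ₁ φ₂) (q 0) x → Conn (PA A₁ A₂ φ₁ φ₂) (q 0) y →
      (PA A₁ A₂ φ₁ φ₂ x y ↔ PA A₁ A₂ φ₁ φ₂ (F x) (F y)) := by
    intro x y hx hy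
    obtain ⟨hx1, hx2⟩ := FonC x hx
    obtain ⟨hy1, hy2⟩ := FonC y hy
    rw [hx2, hy2]
    exact and_congr (hf₁ _ _) (hf₂ _ _)
  have hvi : ∀ x y, Conn (PA A₁ A₂ φ₁ φ₂) (F (q 0)) x →
      Conn (PA A₁ A₂ φ₁ φ₂) (F (q 0)) y →
      (PA A₁ A₂ φ₁ φ₂ x y ↔ PA A₁ A₂ φ₁ φ₂ (G x) (G y)) := by
    intro x y hx hy
    obtain ⟨hx1, hx2⟩ := GonC x hx
    obtain ⟨hy1, hy2⟩ := GonC y hy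
    rw [hx2, hy2]
    exact and_congr (autoSymm hf₁ _ _) (autoSymm hf₂ _ _)
  obtain ⟨H, hHa, hHC, -, -⟩ := transplant F G (q 0) hi hii hiii hiv hv hvi
  refine ⟨H, fun i => F (q i), hHa, ?_, ?_, ?_⟩
  · intro i
    show PA A₁ A₂ φ₁ φ₂ (F (q i.castSucc)) (F (q i.succ))
    obtain ⟨h1, h2⟩ := FonC _ (arc_conn hq i.castSucc)
    obtain ⟨h5, h6⟩ := FonC _ (arc_conn hq i.succ)
    rw [h2, h6]
    exact ⟨hf₁fwd _ _ (hq i).1, hf₂fwd _ _ (hq i).2⟩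
  · show φ₁ ((F (q 0)).1.1) = ℓ
    rw [hFa2]
    simp only
    rw [hf₁a, hu₁]
  · intro i
    exact hHC _ (arc_conn hq i)

end Product

end LW

/-- The layerwise direct product of two HAT digraphs with Property Z is HAT,
has Property Z, and has finite fibers whenever both factors do. -/
theorem layerwise_product_HAT {V₁ V₂ : Type*}
    (A₁ : V₁ → V₁ → Prop) (A₂ : V₂ → V₂ → Prop)
    (φ₁ : V₁ → ℤ) (φ₂ : V₂ → ℤ)
    (hH₁ : IsHAT A₁) (hH₂ : IsHAT A₂)
    (hZ₁ : IsEpiZ A₁ φ₁) (hZ₂ : IsEpiZ A₂ φ₂) :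
    IsHAT (fun p q : {p : V₁ × V₂ // φ₁ p.1 = φ₂ p.2} =>
        A₁ p.1.1 q.1.1 ∧ A₂ p.1.2 q.1.2) ∧
    IsEpiZ (fun p q : {p : V₁ × V₂ // φ₁ p.1 = φ₂ p.2} =>
        A₁ p.1.1 q.1.1 ∧ A₂ p.1.2 q.1.2) (fun p => φ₁ p.1.1) ∧
    ((∀ i : ℤ, {v : V₁ | φ₁ v = i}.Finite) →
     (∀ i : ℤ, {v : V₂ | φ₂ v = i}.Finite) →
     ∀ i : ℤ, {p : {p : V₁ × V₂ // φ₁ p.1 = φ₂ p.2} | φ₁ p.1.1 = i}.Finite) := by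
  classical
  refine ⟨?_, ⟨?_, ?_, ?_⟩, ?_⟩
  · -- HAT
    intro n
    constructor
    · -- existence of an n-arc
      obtain ⟨a₁, ha₁⟩ := (hH₁ n).1
      obtain ⟨a₂, ha₂⟩ := (hH₂ n).1
      obtain ⟨u₁, hu₁⟩ := hZ₁.2.1 0
      obtain ⟨u₂, hu₂⟩ := hZ₂.2.1 0
      obtain ⟨f₁, hf₁, hf₁a⟩ := LW.vertex_trans hH₁ (a₁ 0) u₁
      obtain ⟨f₂, hf₂, hf₂a⟩ := LW.vertex_trans hH₂ (a₂ 0) u₂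
      have hb₁ : IsArc A₁ (fun i => f₁ (a₁ i)) := fun i => (hf₁ _ _).mp (ha₁ i)
      have hb₂ : IsArc A₂ (fun i => f₂ (a₂ i)) := fun i => (hf₂ _ _).mp (ha₂ i)
      have lev : ∀ i : Fin (n + 1), φ₁ (f₁ (a₁ i)) = φ₂ (f₂ (a₂ i)) := by
        intro i
        have l1 : φ₁ (f₁ (a₁ i)) = φ₁ (f₁ (a₁ 0)) + ((i : ℕ) : ℤ) :=
          LW.arc_level hZ₁.1 hb₁ i
        have l2 : φ₂ (f₂ (a₂ i)) = φ₂ (f₂ (a₂ 0)) + ((i : ℕ) : ℤ) :=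
          LW.arc_level hZ₂.1 hb₂ i
        rw [l1, l2, hf₁a, hf₂a, hu₁, hu₂]
      exact ⟨fun i => ⟨(f₁ (a₁ i), f₂ (a₂ i)), lev i⟩,
        fun i => ⟨(hf₁ _ _).mp (ha₁ i), (hf₂ _ _).mp (ha₂ i)⟩⟩
    · -- transitivity on n-arcs
      intro p q hp hq
      obtain ⟨H, r, hHa, hr, hrlev, hHq⟩ :=
        LW.stepB hH₁ hH₂ hZ₁ hZ₂ q hq (φ₁ (p 0).1.1)
      obtain ⟨Gp, hGa, hGp⟩ := LW.stepA hH₁ hH₂ hZ₁ hZ₂ p r hp hr hrlev.symm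
      refine ⟨Gp.trans H.symm, LW.autoTrans hGa (LW.autoSymm hHa), ?_⟩
      intro i
      have hs : H.symm (r i) = q i := by rw [← hHq i, H.symm_apply_apply]
      rw [Equiv.trans_apply, hGp i, hs]
  · -- Property Z : edges raise the level by one
    rintro u v ⟨h1, -⟩
    exact hZ₁.1 _ _ h1
  · -- Property Z : surjectivity on vertices
    intro i
    obtain ⟨x, hx⟩ := hZ₁.2.1 i
    obtain ⟨y, hy⟩ := hZ₂.2.1 i
    exact ⟨⟨(x, y), by rw [hx, hy]⟩, hx⟩
  · -- Property Z : surjectivity on edges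
    intro i
    obtain ⟨x, x', hx, hxl⟩ := hZ₁.2.2 i
    obtain ⟨y, y', hy, hyl⟩ := hZ₂.2.2 i
    have e1 : φ₁ x = φ₂ y := by rw [hxl, hyl]
    have e2 : φ₁ x' = φ₂ y' := by rw [hZ₁.1 _ _ hx, hZ₂.1 _ _ hy, hxl, hyl]
    exact ⟨⟨(x, y), e1⟩, ⟨(x', y'), e2⟩, ⟨hx, hy⟩, hxl⟩
  · -- finite fibers
    intro h1 h2 i
    apply Set.Finite.of_finite_image (f := fun p => p.1) ?_ Subtype.val_injective.injOn
    apply ((h1 i).prod (h2 i)).subset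
    rintro z ⟨t, ht, rfl⟩
    refine ⟨ht, ?_⟩
    show φ₂ t.1.2 = i
    rw [← t.2]; exact ht
end

section
/- The layerwise direct product of the directed tree T₁ in which every vertex has in-valency 1 and out-valency 2 with the directed tree T₂ in which every vertex has in-valency 2 and out-valency 1 (each with its canonical level function onto ℤ) is a connected vertex-transitive digraph in which every vertex has in-valency 2 and out-valency 2, and its reachability subgraph Δ(e) of any edge e is isomorphic to the complete bipartite digraph K_{2,2}. -/
variable {V : Type*}

section Tree12
variable (A : V → V → Prop) (φ : V → ℤ)
variable (hφ : ∀ u v, A u v → φ v = φ u + 1)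
variable (hin : ∀ v : V, {u | A u v}.ncard = 1)
variable (hout : ∀ v : V, {w | A v w}.ncard = 2)
variable (hconn : ∀ x y : V, Relation.ReflTransGen (fun a b => A a b ∨ A b a) x y)

open Classical in
noncomputable def par (x : V) : V := (Set.ncard_eq_one.mp (hin x)).choose

lemma par_adj (x : V) : A (par A hin x) x := by
  have h := (Set.ncard_eq_one.mp (hin x)).choose_spec
  have : par A hin x ∈ {u | A u x} := by rw [h]; rfl
  exact this

lemma eq_par {y x : V} (h : A y x) : y = par A hin x := by
  have hs := (Set.ncard_eq_one.mp (hin x)).choose_spec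
  have : y ∈ {u | A u x} := h
  rw [hs] at this; exact this

open Classical in
noncomputable def ch0 (x : V) : V := (Set.ncard_eq_two.mp (hout x)).choose
open Classical in
noncomputable def ch1 (x : V) : V := (Set.ncard_eq_two.mp (hout x)).choose_spec.choose

lemma ch_spec (x : V) : ch0 A hout x ≠ ch1 A hout x ∧
    {w | A x w} = {ch0 A hout x, ch1 A hout x} :=
  (Set.ncard_eq_two.mp (hout x)).choose_spec.choose_spec

lemma ch0_adj (x : V) : A x (ch0 A hout x) := by
  have h := (ch_spec A hout x).2
  have : ch0 A hout x ∈ {w | A x w} := by rw [h]; left; rfl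
  exact this

lemma ch1_adj (x : V) : A x (ch1 A hout x) := by
  have h := (ch_spec A hout x).2
  have : ch1 A hout x ∈ {w | A x w} := by rw [h]; right; rfl
  exact this

open Classical in
/-- label of a vertex among the children of its parent -/
noncomputable def lab (x : V) : Fin 2 :=
  if x = ch0 A hout (par A hin x) then 0 else 1

lemma lab_inj {z x y : V} (hx : A z x) (hy : A z y)
    (h : lab A hin hout x = lab A hin hout y) : x = y := by
  have hpx : par A hin x = z := (eq_par A hin hx).symm
  have hpy : par A hin y = z := (eq_par A hin hy).symm
  have hsp := ch_spec A hout z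
  have hx' : x ∈ {w | A z w} := hx
  have hy' : y ∈ {w | A z w} := hy
  rw [hsp.2, Set.mem_insert_iff, Set.mem_singleton_iff] at hx' hy'
  unfold lab at h
  rw [hpx, hpy] at h
  rcases hx' with hx' | hx' <;> rcases hy' with hy' | hy' <;> subst hx' <;> subst hy'
  · rfl
  · rw [if_pos rfl, if_neg (Ne.symm hsp.1)] at h; exact absurd h (by decide)
  · rw [if_neg (Ne.symm hsp.1), if_pos rfl] at h; exact absurd h (by decide)
  · rfl

lemma lab_surj (z : V) (b : Fin 2) : ∃ y, A z y ∧ lab A hin hout y = b := by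
  by_cases hb : b = 0
  · refine ⟨ch0 A hout z, ch0_adj A hout z, ?_⟩
    unfold lab
    rw [← eq_par A hin (ch0_adj A hout z)]
    simp [hb]
  · refine ⟨ch1 A hout z, ch1_adj A hout z, ?_⟩
    unfold lab
    rw [← eq_par A hin (ch1_adj A hout z)]
    rw [if_neg (Ne.symm (ch_spec A hout z).1)]
    omega

include hφ in
lemma phi_par (x : V) : φ (par A hin x) = φ x - 1 := by
  have := hφ _ _ (par_adj A hin x); omega

include hφ in
lemma phi_iter (k : ℕ) (x : V) : φ ((par A hin)^[k] x) = φ x - k := by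
  induction k generalizing x with
  | zero => simp
  | succ n ih =>
    rw [Function.iterate_succ_apply', phi_par A φ hφ hin, ih]
    push_cast; ring

/-- ancestor of x at absolute level i (meaningful for i ≤ φ x) -/
noncomputable def anc (x : V) (i : ℤ) : V := (par A hin)^[(φ x - i).toNat] x

include hφ in
lemma phi_anc {x : V} {i : ℤ} (h : i ≤ φ x) : φ (anc A φ hin x i) = i := by
  unfold anc; rw [phi_iter A φ hφ hin]; omega

lemma anc_self (x : V) : anc A φ hin x (φ x) = x := by
  unfold anc; simp

include hφ in
lemma anc_comp {x : V} {i j : ℤ} (hij : i ≤ j) (hj : j ≤ φ x) :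
    anc A φ hin (anc A φ hin x j) i = anc A φ hin x i := by
  unfold anc
  rw [phi_iter A φ hφ hin]
  rw [← Function.iterate_add_apply]
  congr 1
  omega

lemma anc_par {x : V} {i : ℤ} (h : i ≤ φ x) :
    anc A φ hin x (i - 1) = par A hin (anc A φ hin x i) := by
  unfold anc
  rw [← Function.iterate_succ_apply' (par A hin) (φ x - i).toNat x]
  congr 1
  omega

include hφ in
lemma anc_of_adj {x y : V} (hxy : A x y) {i : ℤ} (h : i ≤ φ x) :
    anc A φ hin y i = anc A φ hin x i := by
  have hy : φ y = φ x + 1 := hφ _ _ hxy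
  have hp : par A hin y = x := (eq_par A hin hxy).symm
  unfold anc
  have h2 : (φ y - i).toNat = (φ x - i).toNat + 1 := by omega
  rw [h2, Function.iterate_succ_apply, hp]

include hconn in
/-- common ancestor -/
lemma merge (x y : V) : ∃ a b : ℕ, (par A hin)^[a] x = (par A hin)^[b] y := by
  have h := hconn x y
  induction h with
  | refl => exact ⟨0, 0, rfl⟩
  | @tail m z hr hstep ih =>
    obtain ⟨a, b, hab⟩ := ih
    rcases hstep with h1 | h1
    · have hp : par A hin z = m := (eq_par A hin h1).symm
      exact ⟨a, b + 1, by rw [Function.iterate_succ_apply, hp, hab]⟩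
    · have hp : par A hin m = z := (eq_par A hin h1).symm
      rcases Nat.eq_zero_or_pos b with rfl | hb
      · simp only [Function.iterate_zero, id] at hab
        exact ⟨a + 1, 0, by
          rw [Function.iterate_succ_apply', hab, hp]; simp⟩
      · obtain ⟨b', rfl⟩ := Nat.exists_eq_succ_of_ne_zero (by omega : b ≠ 0)
        refine ⟨a, b', ?_⟩
        rw [hab, Nat.succ_eq_add_one, Function.iterate_succ_apply, hp]

include hφ hconn in
lemma merge_anc (x y : V) : ∃ m : ℤ, m ≤ φ x ∧ m ≤ φ y ∧
    ∀ i ≤ m, anc A φ hin x i = anc A φ hin y i := by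
  obtain ⟨a, b, hab⟩ := merge A hin hconn x y
  refine ⟨min (φ x - a) (φ y - b), by omega, by omega, fun i hi => ?_⟩
  have hx : (par A hin)^[a] x = anc A φ hin x (φ x - a) := by
    unfold anc; congr 1; omega
  have hy : (par A hin)^[b] y = anc A φ hin y (φ y - b) := by
    unfold anc; congr 1; omega
  have h1 : anc A φ hin x i = anc A φ hin (anc A φ hin x (φ x - a)) i :=
    (anc_comp A φ hφ hin (by omega) (by omega)).symm
  have h2 : anc A φ hin y i = anc A φ hin (anc A φ hin y (φ y - b)) i :=
    (anc_comp A φ hφ hin (by omega) (by omega)).symm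
  rw [h1, h2, ← hx, ← hy, hab]

include hφ in
/-- two vertices at the same level with a common ancestor and equal labels in between are equal -/
lemma eq_of_labels (k : ℕ) (x y : V) (hxy : φ x = φ y)
    (hanc : (par A hin)^[k] x = (par A hin)^[k] y)
    (hlab : ∀ j < k, lab A hin hout ((par A hin)^[j] x) = lab A hin hout ((par A hin)^[j] y)) :
    x = y := by
  induction k generalizing x y with
  | zero => simpa using hanc
  | succ n ih =>
    have hp : par A hin x = par A hin y := by
      apply ih (par A hin x) (par A hin y)
      · rw [phi_par A φ hφ hin, phi_par A φ hφ hin, hxy]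
      · rw [← Function.iterate_succ_apply, ← Function.iterate_succ_apply]; exact hanc
      · intro j hj
        have := hlab (j + 1) (by omega)
        rwa [Function.iterate_succ_apply, Function.iterate_succ_apply] at this
    have h0 := hlab 0 (by omega)
    simp only [Function.iterate_zero, id] at h0
    exact lab_inj A hin hout (x := x) (y := y) (z := par A hin x)
      (par_adj A hin x) (hp ▸ par_adj A hin y) h0

noncomputable def chl (z : V) (b : Fin 2) : V := (lab_surj A hin hout z b).choose

lemma chl_adj (z : V) (b : Fin 2) : A z (chl A hin hout z b) :=
  (lab_surj A hin hout z b).choose_spec.1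

lemma chl_lab (z : V) (b : Fin 2) : lab A hin hout (chl A hin hout z b) = b :=
  (lab_surj A hin hout z b).choose_spec.2

noncomputable def kapPair (u w : V) : ℤ × (ℤ → Fin 2) :=
  (φ w - φ u,
   fun j => if j ≤ φ w - φ u then
      lab A hin hout (anc A φ hin w (φ u + j)) +
        (if j ≤ 0 then lab A hin hout (anc A φ hin u (φ u + j)) else 0)
    else 0)

lemma kap_fst (u w : V) : (kapPair A φ hin hout u w).1 = φ w - φ u := rfl

lemma kap_snd_lo (u w : V) {j : ℤ} (h : j ≤ φ w - φ u) :
    (kapPair A φ hin hout u w).2 j =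
      lab A hin hout (anc A φ hin w (φ u + j)) +
        (if j ≤ 0 then lab A hin hout (anc A φ hin u (φ u + j)) else 0) := by
  simp only [kapPair]; rw [if_pos h]

lemma kap_snd_hi (u w : V) {j : ℤ} (h : φ w - φ u < j) :
    (kapPair A φ hin hout u w).2 j = 0 := by
  simp only [kapPair]; rw [if_neg (by omega)]

def MOK (q : ℤ × (ℤ → Fin 2)) : Prop :=
  (∀ j, q.1 < j → q.2 j = 0) ∧ ∃ N : ℤ, ∀ j ≤ N, q.2 j = 0

include hφ hconn in
lemma kapPair_mem (u w : V) : MOK (kapPair A φ hin hout u w) := by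
  constructor
  · intro j hj
    exact kap_snd_hi A φ hin hout u w (by rw [kap_fst] at hj; omega)
  · obtain ⟨m, hmx, hmy, hm⟩ := merge_anc A φ hφ hin hconn w u
    refine ⟨min (m - φ u) (min (φ w - φ u) 0), fun j hj => ?_⟩
    rw [kap_snd_lo A φ hin hout u w (by omega), hm (φ u + j) (by omega),
      if_pos (by omega : j ≤ 0)]
    omega

def Madj (q r : ℤ × (ℤ → Fin 2)) : Prop :=
  r.1 = q.1 + 1 ∧ ∀ j ≤ q.1, r.2 j = q.2 j

include hφ hconn in
lemma kap_adj (u a b : V) :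
    A a b ↔ Madj (kapPair A φ hin hout u a) (kapPair A φ hin hout u b) := by
  constructor
  · intro hab
    have hb : φ b = φ a + 1 := hφ _ _ hab
    constructor
    · rw [kap_fst, kap_fst]; omega
    · intro j hj
      rw [kap_fst] at hj
      rw [kap_snd_lo A φ hin hout u a hj, kap_snd_lo A φ hin hout u b (by omega),
        anc_of_adj A φ hφ hin hab (by omega)]
  · rintro ⟨h1, h2⟩
    rw [kap_fst, kap_fst] at h1
    have hb : φ b = φ a + 1 := by omega
    have hpb : φ (par A hin b) = φ a := by rw [phi_par A φ hφ hin]; omega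
    obtain ⟨m, hma, hmb, hm⟩ := merge_anc A φ hφ hin hconn a b
    suffices h : par A hin b = a by
      rw [← h]; exact par_adj A hin b
    apply eq_of_labels A φ hφ hin hout ((φ a - m).toNat) _ _ (by omega)
    · have e1 : (par A hin)^[(φ a - m).toNat] (par A hin b)
          = anc A φ hin b m := by
        rw [← Function.iterate_succ_apply]
        unfold anc; congr 1; omega
      have e2 : (par A hin)^[(φ a - m).toNat] a = anc A φ hin a m := rfl
      rw [e1, e2, hm m le_rfl]
    · intro j hj
      have e1 : (par A hin)^[j] (par A hin b) = anc A φ hin b (φ a - j) := by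
        rw [← Function.iterate_succ_apply]
        unfold anc; congr 1; omega
      have e2 : (par A hin)^[j] a = anc A φ hin a (φ a - j) := by
        unfold anc; congr 1; omega
      rw [e1, e2]
      have harg : φ u + (φ a - j - φ u) = φ a - j := by ring
      have h3 := h2 (φ a - j - φ u) (by rw [kap_fst]; omega)
      rw [kap_snd_lo A φ hin hout u a (by rw [kap_fst] at *; omega),
        kap_snd_lo A φ hin hout u b (by omega), harg] at h3
      omega

include hφ hconn in
lemma kap_inj (u : V) : Function.Injective (kapPair A φ hin hout u) := by
  intro a b h
  have h1 : φ a - φ u = φ b - φ u := congrArg Prod.fst h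
  have hab : φ a = φ b := by omega
  have h2 := congrArg Prod.snd h
  obtain ⟨m, hma, hmb, hm⟩ := merge_anc A φ hφ hin hconn a b
  apply eq_of_labels A φ hφ hin hout ((φ a - m).toNat) _ _ hab
  · have e1 : (par A hin)^[(φ a - m).toNat] a = anc A φ hin a m := rfl
    have e2 : (par A hin)^[(φ a - m).toNat] b = anc A φ hin b m := by
      unfold anc; congr 1; omega
    rw [e1, e2, hm m le_rfl]
  · intro j hj
    have e1 : (par A hin)^[j] a = anc A φ hin a (φ a - j) := by
      unfold anc; congr 1; omega
    have e2 : (par A hin)^[j] b = anc A φ hin b (φ a - j) := by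
      unfold anc; congr 1; omega
    rw [e1, e2]
    have harg : φ u + (φ a - j - φ u) = φ a - j := by ring
    have h3 := congrFun h2 (φ a - j - φ u)
    rw [kap_snd_lo A φ hin hout u a (by omega),
      kap_snd_lo A φ hin hout u b (by omega), harg] at h3
    omega

noncomputable def build (x₀ : V) (bits : ℕ → Fin 2) : ℕ → V
  | 0 => x₀
  | t+1 => chl A hin hout (build x₀ bits t) (bits t)

lemma build_adj (x₀ : V) (bits : ℕ → Fin 2) (t : ℕ) :
    A (build A hin hout x₀ bits t) (build A hin hout x₀ bits (t+1)) :=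
  chl_adj A hin hout _ _

lemma build_lab (x₀ : V) (bits : ℕ → Fin 2) (t : ℕ) :
    lab A hin hout (build A hin hout x₀ bits (t+1)) = bits t :=
  chl_lab A hin hout _ _

include hφ in
lemma phi_build (x₀ : V) (bits : ℕ → Fin 2) (t : ℕ) :
    φ (build A hin hout x₀ bits t) = φ x₀ + t := by
  induction t with
  | zero => simp [build]
  | succ n ih =>
    have := hφ _ _ (build_adj A hin hout x₀ bits n)
    rw [this, ih]; push_cast; ring

lemma iter_build (x₀ : V) (bits : ℕ → Fin 2) (r t : ℕ) :
    (par A hin)^[r] (build A hin hout x₀ bits (t + r)) = build A hin hout x₀ bits t := by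
  induction r with
  | zero => rfl
  | succ n ih =>
    have hp : par A hin (build A hin hout x₀ bits (t + n + 1)) = build A hin hout x₀ bits (t + n) :=
      (eq_par A hin (build_adj A hin hout x₀ bits (t + n))).symm
    have : t + (n + 1) = (t + n) + 1 := by omega
    rw [this, Function.iterate_succ_apply, hp]
    have h2 : t + n = t + n := rfl
    calc (par A hin)^[n] (build A hin hout x₀ bits (t + n)) = build A hin hout x₀ bits t := ih

include hφ hconn in
lemma kap_surj (u : V) {q : ℤ × (ℤ → Fin 2)} (hq : MOK q) :
    ∃ w, kapPair A φ hin hout u w = q := by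
  obtain ⟨n, s⟩ := q
  obtain ⟨hupper, N, hN⟩ := hq
  simp only at hupper hN ⊢
  set m : ℤ := min (min N 0) n with hm
  have hm0 : m ≤ 0 := by omega
  have hmN : m ≤ N := by omega
  have hmn : m ≤ n := by omega
  set x₀ : V := anc A φ hin u (φ u + m) with hx₀
  have hφx₀ : φ x₀ = φ u + m := phi_anc A φ hφ hin (by omega)
  set bits : ℕ → Fin 2 := fun t =>
    s (m + t + 1) + (if m + (t : ℤ) + 1 ≤ 0
      then lab A hin hout (anc A φ hin u (φ u + m + t + 1)) else 0) with hbits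
  set K : ℕ := (n - m).toNat with hK
  set w : V := build A hin hout x₀ bits K with hw
  have hφw : φ w = φ u + n := by
    rw [hw, phi_build A φ hφ hin hout]; omega
  have hanc : ∀ t : ℕ, t ≤ K → anc A φ hin w (φ u + m + t) = build A hin hout x₀ bits t := by
    intro t ht
    unfold anc
    have h1 : (φ w - (φ u + m + t)).toNat = K - t := by omega
    rw [h1, hw]
    have h2 := iter_build A hin hout x₀ bits (K - t) t
    rw [(by omega : t + (K - t) = K)] at h2
    exact h2
  refine ⟨w, ?_⟩
  refine Prod.ext ?_ ?_
  · rw [kap_fst]; omega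
  · funext j
    simp only
    rcases lt_or_ge n j with hj | hj
    · rw [kap_snd_hi A φ hin hout u w (by omega), hupper j hj]
    · rcases le_or_gt j m with hjm | hjm
      · -- low zone: below the base point
        rw [kap_snd_lo A φ hin hout u w (by omega)]
        have e0 : anc A φ hin w (φ u + m) = x₀ := by
          have := hanc 0 (by omega)
          simpa [build] using this
        have e1 : anc A φ hin w (φ u + j) = anc A φ hin u (φ u + j) := by
          rw [← anc_comp A φ hφ hin (x := w) (i := φ u + j) (j := φ u + m) (by omega) (by omega)]
          rw [e0, hx₀]
          exact anc_comp A φ hφ hin (by omega) (by omega)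
        rw [e1, if_pos (by omega : j ≤ 0), hN j (by omega)]
        omega
      · -- built zone
        rw [kap_snd_lo A φ hin hout u w (by omega)]
        obtain ⟨t', ht'⟩ : ∃ t' : ℕ, (j - m).toNat = t' + 1 := ⟨(j - m).toNat - 1, by omega⟩
        have harg : φ u + j = φ u + m + ((t' : ℤ) + 1) := by omega
        have e1 : anc A φ hin w (φ u + j) = build A hin hout x₀ bits (t' + 1) := by
          rw [show φ u + j = φ u + m + ((t' + 1 : ℕ) : ℤ) by push_cast; omega]
          exact hanc (t' + 1) (by omega)
        rw [e1, build_lab A hin hout]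
        rw [hbits]
        simp only
        have h5 : m + (t' : ℤ) + 1 = j := by omega
        rw [h5]
        have h6 : φ u + m + (t' : ℤ) + 1 = φ u + j := by omega
        rw [h6]
        omega

include hφ hin hout hconn in
lemma tree_trans (u v : V) :
    ∃ f : V ≃ V, (∀ a b, A a b ↔ A (f a) (f b)) ∧ f u = v := by
  have hbij : ∀ z : V, Function.Bijective
      (fun w => (⟨kapPair A φ hin hout z w, kapPair_mem A φ hφ hin hout hconn z w⟩ :
        {q // MOK q})) := by
    intro z
    constructor
    · intro a b h
      exact kap_inj A φ hφ hin hout hconn z (congrArg Subtype.val h)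
    · rintro ⟨q, hq⟩
      obtain ⟨w, hw⟩ := kap_surj A φ hφ hin hout hconn z hq
      exact ⟨w, Subtype.ext hw⟩
  set eu := Equiv.ofBijective _ (hbij u) with heu
  set ev := Equiv.ofBijective _ (hbij v) with hev
  have heu_val : ∀ w, (eu w : ℤ × (ℤ → Fin 2)) = kapPair A φ hin hout u w := fun _ => rfl
  have hev_val : ∀ w, (ev w : ℤ × (ℤ → Fin 2)) = kapPair A φ hin hout v w := fun _ => rfl
  refine ⟨eu.trans ev.symm, ?_, ?_⟩
  · intro a b
    have hva : kapPair A φ hin hout v (ev.symm (eu a)) = kapPair A φ hin hout u a := by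
      have := ev.apply_symm_apply (eu a)
      have := congrArg Subtype.val this
      rw [hev_val] at this
      exact this
    have hvb : kapPair A φ hin hout v (ev.symm (eu b)) = kapPair A φ hin hout u b := by
      have := ev.apply_symm_apply (eu b)
      have := congrArg Subtype.val this
      rw [hev_val] at this
      exact this
    simp only [Equiv.trans_apply]
    rw [kap_adj A φ hφ hin hout hconn u a b,
      kap_adj A φ hφ hin hout hconn v (ev.symm (eu a)) (ev.symm (eu b)), hva, hvb]
  · have hzero : ∀ z : V, kapPair A φ hin hout z z = (0, fun _ => 0) := by
      intro z
      refine Prod.ext (by rw [kap_fst]; omega) ?_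
      funext j
      rcases le_or_gt j 0 with hj | hj
      · rw [kap_snd_lo A φ hin hout z z (by omega), if_pos hj]
        simp only
        omega
      · rw [kap_snd_hi A φ hin hout z z (by omega)]
    have h1 : eu u = ev v := by
      apply Subtype.ext
      rw [heu_val, hev_val, hzero, hzero]
    simp only [Equiv.trans_apply, h1, Equiv.symm_apply_apply]

end Tree12

section Helpers
variable (A : V → V → Prop) (φ : V → ℤ)

lemma conn_of_tree (htree : (SimpleGraph.fromRel A).IsTree) (x y : V) :
    Relation.ReflTransGen (fun a b => A a b ∨ A b a) x y := by
  obtain ⟨w⟩ := htree.isConnected.preconnected x y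
  induction w with
  | nil => exact Relation.ReflTransGen.refl
  | cons h p ih =>
    rw [SimpleGraph.fromRel_adj] at h
    exact Relation.ReflTransGen.head h.2 ih

lemma auto_shift (hφ : ∀ u v, A u v → φ v = φ u + 1)
    (hconn : ∀ x y : V, Relation.ReflTransGen (fun a b => A a b ∨ A b a) x y)
    (f : V ≃ V) (hf : ∀ a b, A a b ↔ A (f a) (f b)) (x y : V) :
    φ (f x) - φ x = φ (f y) - φ y := by
  have h := hconn x y
  induction h with
  | refl => rfl
  | @tail m z _ hstep ih =>
    rcases hstep with h1 | h1
    · have := hφ _ _ h1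
      have := hφ _ _ ((hf m z).mp h1)
      omega
    · have := hφ _ _ h1
      have := hφ _ _ ((hf z m).mp h1)
      omega

end Helpers

lemma uniq_of_ncard_one {α : Type*} {s : Set α} (h : s.ncard = 1) {a b : α}
    (ha : a ∈ s) (hb : b ∈ s) : a = b := by
  obtain ⟨c, hc⟩ := Set.ncard_eq_one.mp h
  rw [hc] at ha hb
  rw [ha, hb]

section Delta
variable {V₁ V₂ : Type*}
variable (A₁ : V₁ → V₁ → Prop) (A₂ : V₂ → V₂ → Prop) (φ₁ : V₁ → ℤ) (φ₂ : V₂ → ℤ)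
variable (hφ₁ : ∀ u v, A₁ u v → φ₁ v = φ₁ u + 1) (hφ₂ : ∀ u v, A₂ u v → φ₂ v = φ₂ u + 1)
variable (hin₁ : ∀ v : V₁, {u | A₁ u v}.ncard = 1)
variable (hout₂ : ∀ v : V₂, {w | A₂ v w}.ncard = 1)


/-- the candidate reachability class of the edge `e` -/
def SEdge (e : {p : V₁ × V₂ // φ₁ p.1 = φ₂ p.2} × {p : V₁ × V₂ // φ₁ p.1 = φ₂ p.2}) (f : {p : V₁ × V₂ // φ₁ p.1 = φ₂ p.2} × {p : V₁ × V₂ // φ₁ p.1 = φ₂ p.2}) : Prop :=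
  f.1.1.1 = e.1.1.1 ∧ f.2.1.2 = e.2.1.2 ∧ A₁ e.1.1.1 f.2.1.1 ∧ A₂ f.1.1.2 e.2.1.2

include hin₁ hout₂ in
lemma SEdge_closure {e f g : {p : V₁ × V₂ // φ₁ p.1 = φ₂ p.2} × {p : V₁ × V₂ // φ₁ p.1 = φ₂ p.2}} (hf : SEdge A₁ A₂ φ₁ φ₂ e f)
    (hg : A₁ g.1.1.1 g.2.1.1 ∧ A₂ g.1.1.2 g.2.1.2)
    (hshare : g.1 = f.1 ∨ g.2 = f.2) : SEdge A₁ A₂ φ₁ φ₂ e g := by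
  obtain ⟨h1, h2, h3, h4⟩ := hf
  rcases hshare with hs | hs
  · have e22 : g.2.1.2 = e.2.1.2 := by
      apply uniq_of_ncard_one (hout₂ f.1.1.2)
      · show A₂ f.1.1.2 g.2.1.2
        rw [← hs]; exact hg.2
      · exact h4
    refine ⟨by rw [hs]; exact h1, e22, ?_, by rw [hs]; exact h4⟩
    have := hg.1
    rw [hs, h1] at this
    exact this
  · have e11 : g.1.1.1 = e.1.1.1 := by
      have : g.1.1.1 ∈ {t | A₁ t f.2.1.1} := by
        show A₁ g.1.1.1 f.2.1.1
        rw [← hs]; exact hg.1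
      exact uniq_of_ncard_one (hin₁ f.2.1.1) this h3
    refine ⟨e11, by rw [hs]; exact h2, by rw [hs] at *; exact h3, ?_⟩
    have := hg.2
    rw [hs, h2] at this
    exact this

include hin₁ hout₂ in
lemma SEdge_walk {e : {p : V₁ × V₂ // φ₁ p.1 = φ₂ p.2} × {p : V₁ × V₂ // φ₁ p.1 = φ₂ p.2}}
    {n : ℕ} {w : Fin n → ({p : V₁ × V₂ // φ₁ p.1 = φ₂ p.2} × {p : V₁ × V₂ // φ₁ p.1 = φ₂ p.2})}
    {b : Bool}
    (hw : IsAltWalk (fun a b => A₁ a.1.1 b.1.1 ∧ A₂ a.1.2 b.1.2) w b)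
    {i : Fin n} (hi : SEdge A₁ A₂ φ₁ φ₂ e (w i)) (j : Fin n) :
    SEdge A₁ A₂ φ₁ φ₂ e (w j) := by
  have key : ∀ (k : ℕ) (hk : k + 1 < n),
      (SEdge A₁ A₂ φ₁ φ₂ e (w ⟨k, by omega⟩) ↔ SEdge A₁ A₂ φ₁ φ₂ e (w ⟨k + 1, hk⟩)) := by
    intro k hk
    have h := hw.2 ⟨k, by omega⟩ hk
    have hshare : (w ⟨k, by omega⟩).1 = (w ⟨k+1, hk⟩).1 ∨
        (w ⟨k, by omega⟩).2 = (w ⟨k+1, hk⟩).2 := by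
      rcases Bool.eq_false_or_eq_true (((k % 2 == 0) : Bool) == b) with hb | hb <;>
        simp only [hb] at h
      · left; simpa using h
      · right; simpa using h
    constructor
    · intro hs
      exact SEdge_closure A₁ A₂ φ₁ φ₂ hin₁ hout₂ hs (hw.1 ⟨k+1, hk⟩)
        (by rcases hshare with h' | h' <;> [left; right] <;> exact h'.symm)
    · intro hs
      exact SEdge_closure A₁ A₂ φ₁ φ₂ hin₁ hout₂ hs (hw.1 ⟨k, by omega⟩)
        (by rcases hshare with h' | h' <;> [left; right] <;> exact h')
  have up : ∀ d : ℕ, ∀ hk : (i : ℕ) + d < n, SEdge A₁ A₂ φ₁ φ₂ e (w ⟨(i : ℕ) + d, hk⟩) := by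
    intro d
    induction d with
    | zero => intro hk; simpa [Fin.eta] using hi
    | succ d ih =>
      intro hk
      exact (key ((i : ℕ) + d) hk).mp (ih (by omega))
  have down : ∀ d : ℕ, d ≤ (i : ℕ) → SEdge A₁ A₂ φ₁ φ₂ e (w ⟨(i : ℕ) - d, by omega⟩) := by
    intro d
    induction d with
    | zero => intro _; simpa [Fin.eta] using hi
    | succ d ih =>
      intro hd
      have hk : (i : ℕ) - (d + 1) + 1 < n := by omega
      apply (key ((i : ℕ) - (d + 1)) hk).mpr
      have e2 : (⟨(i : ℕ) - (d + 1) + 1, hk⟩ : Fin n) = ⟨(i : ℕ) - d, by omega⟩ := by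
        apply Fin.ext; simp; omega
      rw [e2]
      exact ih (by omega)
  rcases le_or_gt (i : ℕ) (j : ℕ) with hij | hij
  · have := up ((j : ℕ) - (i : ℕ)) (by omega)
    have e3 : (⟨(i : ℕ) + ((j : ℕ) - (i : ℕ)), by omega⟩ : Fin n) = j := by
      apply Fin.ext; simp; omega
    rwa [e3] at this
  · have := down ((i : ℕ) - (j : ℕ)) (by omega)
    have e3 : (⟨(i : ℕ) - ((i : ℕ) - (j : ℕ)), by omega⟩ : Fin n) = j := by
      apply Fin.ext; simp; omega
    rwa [e3] at this

include hin₁ hout₂ in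
lemma reach_iff_SEdge {e : {p : V₁ × V₂ // φ₁ p.1 = φ₂ p.2} × {p : V₁ × V₂ // φ₁ p.1 = φ₂ p.2}}
    (he : A₁ e.1.1.1 e.2.1.1 ∧ A₂ e.1.1.2 e.2.1.2)
    (f : {p : V₁ × V₂ // φ₁ p.1 = φ₂ p.2} × {p : V₁ × V₂ // φ₁ p.1 = φ₂ p.2}) :
    Reach (fun a b => A₁ a.1.1 b.1.1 ∧ A₂ a.1.2 b.1.2) e f ↔ SEdge A₁ A₂ φ₁ φ₂ e f := by
  constructor
  · rintro ⟨n, w, b, hw, ⟨i, hi⟩, ⟨j, hj⟩⟩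
    have hse : SEdge A₁ A₂ φ₁ φ₂ e (w i) := by
      rw [hi]; exact ⟨rfl, rfl, he.1, he.2⟩
    have := SEdge_walk A₁ A₂ φ₁ φ₂ hin₁ hout₂ hw hse j
    rwa [hj] at this
  · intro hf
    refine ⟨3, ![e, (f.1, e.2), f], false, ⟨?_, ?_⟩, ⟨0, rfl⟩, ⟨2, rfl⟩⟩
    · intro i
      fin_cases i
      · exact he
      · refine ⟨?_, hf.2.2.2⟩
        show A₁ f.1.1.1 e.2.1.1
        rw [hf.1]; exact he.1
      · refine ⟨?_, ?_⟩
        · show A₁ f.1.1.1 f.2.1.1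
          rw [hf.1]; exact hf.2.2.1
        · show A₂ f.1.1.2 f.2.1.2
          rw [hf.2.1]; exact hf.2.2.2
    · intro i h
      fin_cases i
      · simp
      · simp
      · exact absurd h (by decide)

include hφ₁ hφ₂ hin₁ hout₂ in
lemma delta_k22 (hout₁ : ∀ v : V₁, {w | A₁ v w}.ncard = 2)
    (hin₂ : ∀ v : V₂, {u | A₂ u v}.ncard = 2)
    (e : {p : V₁ × V₂ // φ₁ p.1 = φ₂ p.2} × {p : V₁ × V₂ // φ₁ p.1 = φ₂ p.2})
    (he : A₁ e.1.1.1 e.2.1.1 ∧ A₂ e.1.1.2 e.2.1.2) :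
    ∃ f : DeltaVerts (fun a b => A₁ a.1.1 b.1.1 ∧ A₂ a.1.2 b.1.2) e ≃ (Fin 2 × Fin 2),
      ∀ u v : DeltaVerts (fun a b => A₁ a.1.1 b.1.1 ∧ A₂ a.1.2 b.1.2) e,
        Reach (fun a b => A₁ a.1.1 b.1.1 ∧ A₂ a.1.2 b.1.2) e
            ((u : {p : V₁ × V₂ // φ₁ p.1 = φ₂ p.2}), (v : {p : V₁ × V₂ // φ₁ p.1 = φ₂ p.2})) ↔
          (f u).1 = 0 ∧ (f v).1 = 1 := by
  classical
  obtain ⟨s₁, s₂, hs12, hsset⟩ := Set.ncard_eq_two.mp (hin₂ e.2.1.2)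
  obtain ⟨t₁, t₂, ht12, htset⟩ := Set.ncard_eq_two.mp (hout₁ e.1.1.1)
  have hs₁ : A₂ s₁ e.2.1.2 := by
    have : s₁ ∈ {u | A₂ u e.2.1.2} := by rw [hsset]; left; rfl
    exact this
  have hs₂ : A₂ s₂ e.2.1.2 := by
    have : s₂ ∈ {u | A₂ u e.2.1.2} := by rw [hsset]; right; rfl
    exact this
  have ht₁ : A₁ e.1.1.1 t₁ := by
    have : t₁ ∈ {w | A₁ e.1.1.1 w} := by rw [htset]; left; rfl
    exact this
  have ht₂ : A₁ e.1.1.1 t₂ := by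
    have : t₂ ∈ {w | A₁ e.1.1.1 w} := by rw [htset]; right; rfl
    exact this
  have hlev : φ₁ e.2.1.1 = φ₁ e.1.1.1 + 1 := hφ₁ _ _ he.1
  have hPm : ∀ s, A₂ s e.2.1.2 → φ₁ e.1.1.1 = φ₂ s := by
    intro s hs
    have h1 := hφ₂ _ _ hs
    have h2 := e.1.2
    have h3 := e.2.2
    omega
  have hQm : ∀ t, A₁ e.1.1.1 t → φ₁ t = φ₂ e.2.1.2 := by
    intro t ht
    have h1 := hφ₁ _ _ ht
    have h3 := e.2.2
    omega
  set P₁ : {p : V₁ × V₂ // φ₁ p.1 = φ₂ p.2} := ⟨(e.1.1.1, s₁), hPm s₁ hs₁⟩ with hP₁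
  set P₂ : {p : V₁ × V₂ // φ₁ p.1 = φ₂ p.2} := ⟨(e.1.1.1, s₂), hPm s₂ hs₂⟩ with hP₂
  set Q₁ : {p : V₁ × V₂ // φ₁ p.1 = φ₂ p.2} := ⟨(t₁, e.2.1.2), hQm t₁ ht₁⟩ with hQ₁
  set Q₂ : {p : V₁ × V₂ // φ₁ p.1 = φ₂ p.2} := ⟨(t₂, e.2.1.2), hQm t₂ ht₂⟩ with hQ₂
  -- characterization of S-edges
  have hSE : ∀ a₀ b₀ : {p : V₁ × V₂ // φ₁ p.1 = φ₂ p.2},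
      SEdge A₁ A₂ φ₁ φ₂ e (a₀, b₀) ↔ ((a₀ = P₁ ∨ a₀ = P₂) ∧ (b₀ = Q₁ ∨ b₀ = Q₂)) := by
    intro a₀ b₀
    constructor
    · rintro ⟨h1, h2, h3, h4⟩
      constructor
      · have hmem : a₀.1.2 ∈ {u | A₂ u e.2.1.2} := h4
        rw [hsset, Set.mem_insert_iff, Set.mem_singleton_iff] at hmem
        rcases hmem with h | h
        · left; exact Subtype.ext (Prod.ext_iff.mpr ⟨h1, h⟩)
        · right; exact Subtype.ext (Prod.ext_iff.mpr ⟨h1, h⟩)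
      · have hmem : b₀.1.1 ∈ {w | A₁ e.1.1.1 w} := h3
        rw [htset, Set.mem_insert_iff, Set.mem_singleton_iff] at hmem
        rcases hmem with h | h
        · left; exact Subtype.ext (Prod.ext_iff.mpr ⟨h, h2⟩)
        · right; exact Subtype.ext (Prod.ext_iff.mpr ⟨h, h2⟩)
    · rintro ⟨(rfl | rfl), (rfl | rfl)⟩
      · exact ⟨rfl, rfl, ht₁, hs₁⟩
      · exact ⟨rfl, rfl, ht₂, hs₁⟩
      · exact ⟨rfl, rfl, ht₁, hs₂⟩
      · exact ⟨rfl, rfl, ht₂, hs₂⟩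
  have hR : ∀ g, Reach (fun a b => A₁ a.1.1 b.1.1 ∧ A₂ a.1.2 b.1.2) e g ↔
      SEdge A₁ A₂ φ₁ φ₂ e g := reach_iff_SEdge A₁ A₂ φ₁ φ₂ hin₁ hout₂ he
  -- the four vertices
  have hDV : DeltaVerts (fun a b => A₁ a.1.1 b.1.1 ∧ A₂ a.1.2 b.1.2) e
      = {P₁, P₂, Q₁, Q₂} := by
    ext v
    constructor
    · rintro ⟨u, hu | hu⟩
      · rw [hR] at hu
        have := ((hSE v u).mp hu).1
        rcases this with h | h
        · rw [h]; left; rfl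
        · rw [h]; right; left; rfl
      · rw [hR] at hu
        have := ((hSE u v).mp hu).2
        rcases this with h | h
        · rw [h]; right; right; left; rfl
        · rw [h]; right; right; right; rfl
    · intro hv
      rcases hv with h | h | h | h
      · exact ⟨Q₁, Or.inl (by rw [hR, h]; exact (hSE _ _).mpr ⟨Or.inl rfl, Or.inl rfl⟩)⟩
      · exact ⟨Q₁, Or.inl (by rw [hR, h]; exact (hSE _ _).mpr ⟨Or.inr rfl, Or.inl rfl⟩)⟩
      · exact ⟨P₁, Or.inr (by rw [hR, h]; exact (hSE _ _).mpr ⟨Or.inl rfl, Or.inl rfl⟩)⟩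
      · exact ⟨P₁, Or.inr (by rw [hR, h]; exact (hSE _ _).mpr ⟨Or.inl rfl, Or.inr rfl⟩)⟩
  -- distinctness
  have hsne : s₁ ≠ s₂ := hs12
  have htne : t₁ ≠ t₂ := ht12
  have hPP : P₁ ≠ P₂ := by
    intro h
    rw [hP₁, hP₂, Subtype.mk.injEq, Prod.mk.injEq] at h
    exact hsne h.2
  have hQQ : Q₁ ≠ Q₂ := by
    intro h
    rw [hQ₁, hQ₂, Subtype.mk.injEq, Prod.mk.injEq] at h
    exact htne h.1
  have hPQ : ∀ t, A₁ e.1.1.1 t → e.1.1.1 ≠ t := by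
    intro t ht h
    have h1 := hφ₁ _ _ ht
    rw [← h] at h1
    omega
  have hP₁Q₁ : P₁ ≠ Q₁ := by
    intro h
    rw [hP₁, hQ₁, Subtype.mk.injEq, Prod.mk.injEq] at h
    exact hPQ t₁ ht₁ h.1
  have hP₁Q₂ : P₁ ≠ Q₂ := by
    intro h
    rw [hP₁, hQ₂, Subtype.mk.injEq, Prod.mk.injEq] at h
    exact hPQ t₂ ht₂ h.1
  have hP₂Q₁ : P₂ ≠ Q₁ := by
    intro h
    rw [hP₂, hQ₁, Subtype.mk.injEq, Prod.mk.injEq] at h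
    exact hPQ t₁ ht₁ h.1
  have hP₂Q₂ : P₂ ≠ Q₂ := by
    intro h
    rw [hP₂, hQ₂, Subtype.mk.injEq, Prod.mk.injEq] at h
    exact hPQ t₂ ht₂ h.1
  -- the bijection
  set g : {p : V₁ × V₂ // φ₁ p.1 = φ₂ p.2} → Fin 2 × Fin 2 := fun z =>
    if z = P₁ then (0, 0) else if z = P₂ then (0, 1)
    else if z = Q₁ then (1, 0) else (1, 1) with hg
  have hgP₁ : g P₁ = (0, 0) := by rw [hg]; simp
  have hgP₂ : g P₂ = (0, 1) := by rw [hg]; simp [Ne.symm hPP]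
  have hgQ₁ : g Q₁ = (1, 0) := by rw [hg]; simp [Ne.symm hP₁Q₁, Ne.symm hP₂Q₁]
  have hgQ₂ : g Q₂ = (1, 1) := by
    rw [hg]; simp [Ne.symm hP₁Q₂, Ne.symm hP₂Q₂, Ne.symm hQQ]
  have hmP₁ : P₁ ∈ DeltaVerts (fun a b => A₁ a.1.1 b.1.1 ∧ A₂ a.1.2 b.1.2) e := by
    rw [hDV]; left; rfl
  have hmP₂ : P₂ ∈ DeltaVerts (fun a b => A₁ a.1.1 b.1.1 ∧ A₂ a.1.2 b.1.2) e := by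
    rw [hDV]; right; left; rfl
  have hmQ₁ : Q₁ ∈ DeltaVerts (fun a b => A₁ a.1.1 b.1.1 ∧ A₂ a.1.2 b.1.2) e := by
    rw [hDV]; right; right; left; rfl
  have hmQ₂ : Q₂ ∈ DeltaVerts (fun a b => A₁ a.1.1 b.1.1 ∧ A₂ a.1.2 b.1.2) e := by
    rw [hDV]; right; right; right; rfl
  have hmem4 : ∀ v : DeltaVerts (fun a b => A₁ a.1.1 b.1.1 ∧ A₂ a.1.2 b.1.2) e,
      (v : {p : V₁ × V₂ // φ₁ p.1 = φ₂ p.2}) = P₁ ∨ (v : _) = P₂ ∨ (v : _) = Q₁ ∨ (v : _) = Q₂ := by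
    rintro ⟨v, hv⟩
    rw [hDV] at hv
    rcases hv with h | h | h | h
    · exact Or.inl h
    · exact Or.inr (Or.inl h)
    · exact Or.inr (Or.inr (Or.inl h))
    · exact Or.inr (Or.inr (Or.inr h))
  refine ⟨⟨fun v => g v, fun q =>
      if q.1 = 0 then (if q.2 = 0 then ⟨P₁, hmP₁⟩ else ⟨P₂, hmP₂⟩)
      else (if q.2 = 0 then ⟨Q₁, hmQ₁⟩ else ⟨Q₂, hmQ₂⟩), ?_, ?_⟩, ?_⟩
  · -- left inverse
    rintro v
    rcases hmem4 v with h | h | h | h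
    · have hgv : g (v : {p : V₁ × V₂ // φ₁ p.1 = φ₂ p.2}) = (0,0) := by rw [h]; exact hgP₁
      simp only [hgv]
      norm_num
      exact Subtype.ext h.symm
    · have hgv : g (v : {p : V₁ × V₂ // φ₁ p.1 = φ₂ p.2}) = (0,1) := by rw [h]; exact hgP₂
      simp only [hgv]
      norm_num
      exact Subtype.ext h.symm
    · have hgv : g (v : {p : V₁ × V₂ // φ₁ p.1 = φ₂ p.2}) = (1,0) := by rw [h]; exact hgQ₁
      simp only [hgv]
      norm_num
      exact Subtype.ext h.symm
    · have hgv : g (v : {p : V₁ × V₂ // φ₁ p.1 = φ₂ p.2}) = (1,1) := by rw [h]; exact hgQ₂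
      simp only [hgv]
      norm_num
      exact Subtype.ext h.symm
  · -- right inverse
    rintro ⟨a, b⟩
    fin_cases a <;> fin_cases b <;> simp [hgP₁, hgP₂, hgQ₁, hgQ₂]
  · intro u v
    rw [hR, hSE]
    constructor
    · rintro ⟨hu, hv⟩
      constructor
      · rcases hu with h | h <;> simp only [Equiv.coe_fn_mk, h, hgP₁, hgP₂]
      · rcases hv with h | h <;> simp only [Equiv.coe_fn_mk, h, hgQ₁, hgQ₂]
    · rintro ⟨h0, h1⟩
      simp only [Equiv.coe_fn_mk] at h0 h1
      constructor
      · rcases hmem4 u with h | h | h | h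
        · exact Or.inl h
        · exact Or.inr h
        · rw [h, hgQ₁] at h0; exact absurd h0 (by decide)
        · rw [h, hgQ₂] at h0; exact absurd h0 (by decide)
      · rcases hmem4 v with h | h | h | h
        · rw [h, hgP₁] at h1; exact absurd h1 (by decide)
        · rw [h, hgP₂] at h1; exact absurd h1 (by decide)
        · exact Or.inl h
        · exact Or.inr h

end Delta

section Product
variable {V₁ V₂ : Type*}
variable (A₁ : V₁ → V₁ → Prop) (A₂ : V₂ → V₂ → Prop) (φ₁ : V₁ → ℤ) (φ₂ : V₂ → ℤ)
variable (hφ₁ : ∀ u v, A₁ u v → φ₁ v = φ₁ u + 1) (hφ₂ : ∀ u v, A₂ u v → φ₂ v = φ₂ u + 1)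

include hφ₁ hφ₂ in
lemma dl_degrees
    (hin₁ : ∀ v : V₁, {u | A₁ u v}.ncard = 1)
    (hout₁ : ∀ v : V₁, {w | A₁ v w}.ncard = 2)
    (hin₂ : ∀ v : V₂, {u | A₂ u v}.ncard = 2)
    (hout₂ : ∀ v : V₂, {w | A₂ v w}.ncard = 1)
    (v : {p : V₁ × V₂ // φ₁ p.1 = φ₂ p.2}) :
    {u : {p : V₁ × V₂ // φ₁ p.1 = φ₂ p.2} | A₁ u.1.1 v.1.1 ∧ A₂ u.1.2 v.1.2}.ncard = 2 ∧
    {w : {p : V₁ × V₂ // φ₁ p.1 = φ₂ p.2} | A₁ v.1.1 w.1.1 ∧ A₂ v.1.2 w.1.2}.ncard = 2 := by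
  constructor
  · obtain ⟨a, haset⟩ := Set.ncard_eq_one.mp (hin₁ v.1.1)
    obtain ⟨b₁, b₂, hbne, hbset⟩ := Set.ncard_eq_two.mp (hin₂ v.1.2)
    have ha : A₁ a v.1.1 := by
      have : a ∈ {u | A₁ u v.1.1} := by rw [haset]; rfl
      exact this
    have hb₁ : A₂ b₁ v.1.2 := by
      have : b₁ ∈ {u | A₂ u v.1.2} := by rw [hbset]; left; rfl
      exact this
    have hb₂ : A₂ b₂ v.1.2 := by
      have : b₂ ∈ {u | A₂ u v.1.2} := by rw [hbset]; right; rfl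
      exact this
    have hmem : ∀ b, A₂ b v.1.2 → φ₁ a = φ₂ b := by
      intro b hb
      have h1 := hφ₁ _ _ ha
      have h2 := hφ₂ _ _ hb
      have h3 := v.2
      omega
    have hset : {u : {p : V₁ × V₂ // φ₁ p.1 = φ₂ p.2} | A₁ u.1.1 v.1.1 ∧ A₂ u.1.2 v.1.2}
        = {⟨(a, b₁), hmem b₁ hb₁⟩, ⟨(a, b₂), hmem b₂ hb₂⟩} := by
      ext u
      constructor
      · rintro ⟨h1, h2⟩
        have ha' : u.1.1 ∈ {t | A₁ t v.1.1} := h1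
        rw [haset, Set.mem_singleton_iff] at ha'
        have hb' : u.1.2 ∈ {t | A₂ t v.1.2} := h2
        rw [hbset, Set.mem_insert_iff, Set.mem_singleton_iff] at hb'
        rcases hb' with h | h
        · left; exact Subtype.ext (Prod.ext_iff.mpr ⟨ha', h⟩)
        · right; exact Subtype.ext (Prod.ext_iff.mpr ⟨ha', h⟩)
      · rintro (rfl | rfl)
        · exact ⟨ha, hb₁⟩
        · exact ⟨ha, hb₂⟩
    rw [hset]
    apply Set.ncard_pair
    intro h
    rw [Subtype.mk.injEq, Prod.mk.injEq] at h
    exact hbne h.2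
  · obtain ⟨c₁, c₂, hcne, hcset⟩ := Set.ncard_eq_two.mp (hout₁ v.1.1)
    obtain ⟨d, hdset⟩ := Set.ncard_eq_one.mp (hout₂ v.1.2)
    have hd : A₂ v.1.2 d := by
      have : d ∈ {w | A₂ v.1.2 w} := by rw [hdset]; rfl
      exact this
    have hc₁ : A₁ v.1.1 c₁ := by
      have : c₁ ∈ {w | A₁ v.1.1 w} := by rw [hcset]; left; rfl
      exact this
    have hc₂ : A₁ v.1.1 c₂ := by
      have : c₂ ∈ {w | A₁ v.1.1 w} := by rw [hcset]; right; rfl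
      exact this
    have hmem : ∀ c, A₁ v.1.1 c → φ₁ c = φ₂ d := by
      intro c hc
      have h1 := hφ₁ _ _ hc
      have h2 := hφ₂ _ _ hd
      have h3 := v.2
      omega
    have hset : {w : {p : V₁ × V₂ // φ₁ p.1 = φ₂ p.2} | A₁ v.1.1 w.1.1 ∧ A₂ v.1.2 w.1.2}
        = {⟨(c₁, d), hmem c₁ hc₁⟩, ⟨(c₂, d), hmem c₂ hc₂⟩} := by
      ext u
      constructor
      · rintro ⟨h1, h2⟩
        have hc' : u.1.1 ∈ {t | A₁ v.1.1 t} := h1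
        rw [hcset, Set.mem_insert_iff, Set.mem_singleton_iff] at hc'
        have hd' : u.1.2 ∈ {t | A₂ v.1.2 t} := h2
        rw [hdset, Set.mem_singleton_iff] at hd'
        rcases hc' with h | h
        · left; exact Subtype.ext (Prod.ext_iff.mpr ⟨h, hd'⟩)
        · right; exact Subtype.ext (Prod.ext_iff.mpr ⟨h, hd'⟩)
      · rintro (rfl | rfl)
        · exact ⟨hc₁, hd⟩
        · exact ⟨hc₂, hd⟩
    rw [hset]
    apply Set.ncard_pair
    intro h
    rw [Subtype.mk.injEq, Prod.mk.injEq] at h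
    exact hcne h.1

end Product

lemma phi_iter_up {W : Type*} (f : W → W) (ψ : W → ℤ) (h : ∀ x, ψ (f x) = ψ x + 1)
    (n : ℕ) (x : W) : ψ (f^[n] x) = ψ x + n := by
  induction n generalizing x with
  | zero => simp
  | succ k ih =>
    rw [Function.iterate_succ_apply', h, ih]; push_cast; ring

lemma iter_retract {W : Type*} (f g : W → W) (h : ∀ x, f (g x) = x) (n : ℕ) (x : W) :
    f^[n] (g^[n] x) = x := by
  induction n generalizing x with
  | zero => rfl
  | succ k ih =>
    rw [Function.iterate_succ_apply' g, Function.iterate_succ_apply f, h, ih]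

lemma rtg_symm {α : Type*} {r : α → α → Prop} (hs : ∀ a b, r a b → r b a) {x y : α}
    (h : Relation.ReflTransGen r x y) : Relation.ReflTransGen r y x := by
  induction h with
  | refl => exact Relation.ReflTransGen.refl
  | tail _ hstep ih => exact Relation.ReflTransGen.head (hs _ _ hstep) ih

section Connect
variable {V₁ V₂ : Type*}
variable (A₁ : V₁ → V₁ → Prop) (A₂ : V₂ → V₂ → Prop) (φ₁ : V₁ → ℤ) (φ₂ : V₂ → ℤ)

lemma dl_connected
    (hφ₁ : ∀ u v, A₁ u v → φ₁ v = φ₁ u + 1) (hφ₂ : ∀ u v, A₂ u v → φ₂ v = φ₂ u + 1)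
    (hin₁ : ∀ v : V₁, {u | A₁ u v}.ncard = 1)
    (hout₁ : ∀ v : V₁, {w | A₁ v w}.ncard = 2)
    (hin₂ : ∀ v : V₂, {u | A₂ u v}.ncard = 2)
    (hout₂ : ∀ v : V₂, {w | A₂ v w}.ncard = 1)
    (hconn₁ : ∀ x y : V₁, Relation.ReflTransGen (fun a b => A₁ a b ∨ A₁ b a) x y)
    (hconn₂ : ∀ x y : V₂, Relation.ReflTransGen (fun a b => A₂ a b ∨ A₂ b a) x y)
    (u v : {p : V₁ × V₂ // φ₁ p.1 = φ₂ p.2}) :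
    Relation.ReflTransGen
      (fun a b : {p : V₁ × V₂ // φ₁ p.1 = φ₂ p.2} =>
        (A₁ a.1.1 b.1.1 ∧ A₂ a.1.2 b.1.2) ∨ (A₁ b.1.1 a.1.1 ∧ A₂ b.1.2 a.1.2)) u v := by
  set R : {p : V₁ × V₂ // φ₁ p.1 = φ₂ p.2} → {p : V₁ × V₂ // φ₁ p.1 = φ₂ p.2} → Prop :=
    fun a b => (A₁ a.1.1 b.1.1 ∧ A₂ a.1.2 b.1.2) ∨ (A₁ b.1.1 a.1.1 ∧ A₂ b.1.2 a.1.2) with hR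
  have hRsymm : ∀ a b, R a b → R b a := fun a b h => h.elim Or.inr Or.inl
  set A₂' : V₂ → V₂ → Prop := fun a b => A₂ b a with hA₂'
  set p₁ := par A₁ hin₁ with hp₁def
  set σ₁ := ch0 A₁ hout₁ with hσdef
  set chd := par A₂' hout₂ with hchddef
  set ρ := ch0 A₂' hin₂ with hρdef
  have hp₁ : ∀ x, A₁ (p₁ x) x := par_adj A₁ hin₁
  have hσ : ∀ x, A₁ x (σ₁ x) := ch0_adj A₁ hout₁
  have hchd : ∀ x, A₂ x (chd x) := fun x => par_adj A₂' hout₂ x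
  have hρ : ∀ x, A₂ (ρ x) x := fun x => ch0_adj A₂' hin₂ x
  have hcr : ∀ x, chd (ρ x) = x := fun x => (eq_par A₂' hout₂ (hρ x)).symm
  have hcri : ∀ n x, chd^[n] (ρ^[n] x) = x := fun n x => iter_retract chd ρ hcr n x
  have hLp : ∀ (n : ℕ) (x : V₁), φ₁ (p₁^[n] x) = φ₁ x - n := phi_iter A₁ φ₁ hφ₁ hin₁
  have hLσ : ∀ (n : ℕ) (x : V₁), φ₁ (σ₁^[n] x) = φ₁ x + n :=
    phi_iter_up σ₁ φ₁ (fun x => hφ₁ _ _ (hσ x))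
  have hLc : ∀ (n : ℕ) (x : V₂), φ₂ (chd^[n] x) = φ₂ x + n :=
    phi_iter_up chd φ₂ (fun x => hφ₂ _ _ (hchd x))
  have hLρ : ∀ (n : ℕ) (x : V₂), φ₂ (ρ^[n] x) = φ₂ x - n := by
    intro n x
    induction n generalizing x with
    | zero => simp
    | succ k ih =>
      rw [Function.iterate_succ_apply']
      have := hφ₂ _ _ (hρ (ρ^[k] x))
      rw [ih] at this
      push_cast
      omega
  -- walking up
  have up_chain : ∀ (n : ℕ) (x : {p : V₁ × V₂ // φ₁ p.1 = φ₂ p.2})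
      (h : φ₁ (σ₁^[n] x.1.1) = φ₂ (chd^[n] x.1.2)),
      Relation.ReflTransGen R x ⟨(σ₁^[n] x.1.1, chd^[n] x.1.2), h⟩ := by
    intro n
    induction n with
    | zero =>
      intro x h
      have : (⟨(σ₁^[0] x.1.1, chd^[0] x.1.2), h⟩ : {p : V₁ × V₂ // φ₁ p.1 = φ₂ p.2}) = x :=
        Subtype.ext (Prod.ext_iff.mpr ⟨rfl, rfl⟩)
      rw [this]
    | succ k ih =>
      intro x h
      have hmid : φ₁ (σ₁^[k] x.1.1) = φ₂ (chd^[k] x.1.2) := by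
        have := x.2; rw [hLσ, hLc]; omega
      refine Relation.ReflTransGen.tail (ih x hmid) ?_
      left
      constructor
      · show A₁ (σ₁^[k] x.1.1) (σ₁^[k+1] x.1.1)
        rw [Function.iterate_succ_apply']
        exact hσ _
      · show A₂ (chd^[k] x.1.2) (chd^[k+1] x.1.2)
        rw [Function.iterate_succ_apply']
        exact hchd _
  -- walking down
  have down_chain : ∀ (n : ℕ) (x : {p : V₁ × V₂ // φ₁ p.1 = φ₂ p.2})
      (h : φ₁ (p₁^[n] x.1.1) = φ₂ (ρ^[n] x.1.2)),
      Relation.ReflTransGen R (⟨(p₁^[n] x.1.1, ρ^[n] x.1.2), h⟩) x := by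
    intro n
    induction n with
    | zero =>
      intro x h
      have : (⟨(p₁^[0] x.1.1, ρ^[0] x.1.2), h⟩ : {p : V₁ × V₂ // φ₁ p.1 = φ₂ p.2}) = x :=
        Subtype.ext (Prod.ext_iff.mpr ⟨rfl, rfl⟩)
      rw [this]
    | succ k ih =>
      intro x h
      have hmid : φ₁ (p₁^[k] x.1.1) = φ₂ (ρ^[k] x.1.2) := by
        have := x.2; rw [hLp, hLρ]; omega
      refine Relation.ReflTransGen.head ?_ (ih x hmid)
      left
      constructor
      · show A₁ (p₁^[k+1] x.1.1) (p₁^[k] x.1.1)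
        rw [Function.iterate_succ_apply']
        exact hp₁ _
      · show A₂ (ρ^[k+1] x.1.2) (ρ^[k] x.1.2)
        rw [Function.iterate_succ_apply']
        exact hρ _
  -- climbing back up to a prescribed vertex
  have ascend : ∀ (n : ℕ) (y : {p : V₁ × V₂ // φ₁ p.1 = φ₂ p.2}) (z₂ : V₂)
      (hz : chd^[n] z₂ = y.1.2) (h : φ₁ (p₁^[n] y.1.1) = φ₂ z₂),
      Relation.ReflTransGen R (⟨(p₁^[n] y.1.1, z₂), h⟩) y := by
    intro n
    induction n with
    | zero =>
      intro y z₂ hz h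
      have : (⟨(p₁^[0] y.1.1, z₂), h⟩ : {p : V₁ × V₂ // φ₁ p.1 = φ₂ p.2}) = y :=
        Subtype.ext (Prod.ext_iff.mpr ⟨rfl, hz⟩)
      rw [this]
    | succ k ih =>
      intro y z₂ hz h
      have hz' : chd^[k] (chd z₂) = y.1.2 := by
        rw [← Function.iterate_succ_apply]; exact hz
      have h' : φ₁ (p₁^[k] y.1.1) = φ₂ (chd z₂) := by
        have h1 := hφ₂ _ _ (hchd z₂)
        have h2 := hLp (k+1) y.1.1
        have h3 := hLp k y.1.1
        omega
      refine Relation.ReflTransGen.head ?_ (ih y (chd z₂) hz' h')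
      left
      constructor
      · show A₁ (p₁^[k+1] y.1.1) (p₁^[k] y.1.1)
        rw [Function.iterate_succ_apply']
        exact hp₁ _
      · exact hchd z₂
  -- main argument
  have hconn₂' : ∀ x y : V₂, Relation.ReflTransGen (fun a b => A₂' a b ∨ A₂' b a) x y := by
    intro x y
    exact Relation.ReflTransGen.mono (r := fun a b => A₂ a b ∨ A₂ b a)
      (p := fun a b => A₂' a b ∨ A₂' b a) (fun a b h => Or.symm h) x y (hconn₂ x y)
  obtain ⟨a, b, hab⟩ := merge A₂' hout₂ hconn₂' u.1.2 v.1.2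
  have hu' : φ₁ (σ₁^[a] u.1.1) = φ₂ (chd^[a] u.1.2) := by
    have := u.2; rw [hLσ, hLc]; omega
  have hv' : φ₁ (σ₁^[b] v.1.1) = φ₂ (chd^[b] v.1.2) := by
    have := v.2; rw [hLσ, hLc]; omega
  set u' : {p : V₁ × V₂ // φ₁ p.1 = φ₂ p.2} := ⟨(σ₁^[a] u.1.1, chd^[a] u.1.2), hu'⟩ with hu'def
  set v' : {p : V₁ × V₂ // φ₁ p.1 = φ₂ p.2} := ⟨(σ₁^[b] v.1.1, chd^[b] v.1.2), hv'⟩ with hv'def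
  obtain ⟨k, l, hkl⟩ := merge A₁ hin₁ hconn₁ (σ₁^[a] u.1.1) (σ₁^[b] v.1.1)
  have hlev : φ₁ (σ₁^[a] u.1.1) = φ₁ (σ₁^[b] v.1.1) := by
    rw [hu', hv', hab]
  have hkeq : k = l := by
    have h1 := hLp k (σ₁^[a] u.1.1)
    have h2 := hLp l (σ₁^[b] v.1.1)
    have h3 := congrArg φ₁ hkl
    rw [h1, h2] at h3
    omega
  subst hkeq
  have hw : φ₁ (p₁^[k] u'.1.1) = φ₂ (ρ^[k] u'.1.2) := by
    have := u'.2; rw [hLp, hLρ]; omega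
  have leg1 : Relation.ReflTransGen R u u' := up_chain a u hu'
  have leg4 : Relation.ReflTransGen R v v' := up_chain b v hv'
  have leg2 : Relation.ReflTransGen R (⟨(p₁^[k] u'.1.1, ρ^[k] u'.1.2), hw⟩) u' :=
    down_chain k u' hw
  have hzcond : chd^[k] (ρ^[k] u'.1.2) = v'.1.2 := by
    rw [hcri]
    show chd^[a] u.1.2 = chd^[b] v.1.2
    exact hab
  have hwv : φ₁ (p₁^[k] v'.1.1) = φ₂ (ρ^[k] u'.1.2) := by
    show φ₁ (p₁^[k] (σ₁^[b] v.1.1)) = _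
    rw [← hkl]
    exact hw
  have leg3 : Relation.ReflTransGen R (⟨(p₁^[k] v'.1.1, ρ^[k] u'.1.2), hwv⟩) v' :=
    ascend k v' (ρ^[k] u'.1.2) hzcond hwv
  have hww : (⟨(p₁^[k] u'.1.1, ρ^[k] u'.1.2), hw⟩ : {p : V₁ × V₂ // φ₁ p.1 = φ₂ p.2})
      = ⟨(p₁^[k] v'.1.1, ρ^[k] u'.1.2), hwv⟩ := by
    apply Subtype.ext
    apply Prod.ext_iff.mpr
    exact ⟨hkl, rfl⟩
  refine leg1.trans ((rtg_symm hRsymm leg2).trans ?_)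
  rw [hww]
  exact leg3.trans (rtg_symm hRsymm leg4)

end Connect

section Trans
variable {V₁ V₂ : Type*}
variable (A₁ : V₁ → V₁ → Prop) (A₂ : V₂ → V₂ → Prop) (φ₁ : V₁ → ℤ) (φ₂ : V₂ → ℤ)

lemma dl_transitive
    (hφ₁ : ∀ u v, A₁ u v → φ₁ v = φ₁ u + 1) (hφ₂ : ∀ u v, A₂ u v → φ₂ v = φ₂ u + 1)
    (hin₁ : ∀ v : V₁, {u | A₁ u v}.ncard = 1)
    (hout₁ : ∀ v : V₁, {w | A₁ v w}.ncard = 2)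
    (hin₂ : ∀ v : V₂, {u | A₂ u v}.ncard = 2)
    (hout₂ : ∀ v : V₂, {w | A₂ v w}.ncard = 1)
    (hconn₁ : ∀ x y : V₁, Relation.ReflTransGen (fun a b => A₁ a b ∨ A₁ b a) x y)
    (hconn₂ : ∀ x y : V₂, Relation.ReflTransGen (fun a b => A₂ a b ∨ A₂ b a) x y)
    (u v : {p : V₁ × V₂ // φ₁ p.1 = φ₂ p.2}) :
    ∃ f : {p : V₁ × V₂ // φ₁ p.1 = φ₂ p.2} ≃ {p : V₁ × V₂ // φ₁ p.1 = φ₂ p.2},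
      IsAuto (fun a b => A₁ a.1.1 b.1.1 ∧ A₂ a.1.2 b.1.2) f ∧ f u = v := by
  obtain ⟨f₁, hf₁, hfu₁⟩ := tree_trans A₁ φ₁ hφ₁ hin₁ hout₁ hconn₁ u.1.1 v.1.1
  have hφ₂' : ∀ a b, (fun a b => A₂ b a) a b → (fun x => -φ₂ x) b = (fun x => -φ₂ x) a + 1 := by
    intro a b h
    have := hφ₂ b a h
    simp only
    omega
  have hconn₂' : ∀ x y : V₂,
      Relation.ReflTransGen (fun a b => (fun a b => A₂ b a) a b ∨ (fun a b => A₂ b a) b a) x y := by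
    intro x y
    exact Relation.ReflTransGen.mono (r := fun a b => A₂ a b ∨ A₂ b a)
      (p := fun a b => (fun a b => A₂ b a) a b ∨ (fun a b => A₂ b a) b a)
      (fun a b h => Or.symm h) x y (hconn₂ x y)
  obtain ⟨f₂, hf₂, hfu₂⟩ := tree_trans (fun a b => A₂ b a) (fun x => -φ₂ x) hφ₂'
    hout₂ hin₂ hconn₂' u.1.2 v.1.2
  have hf₂' : ∀ a b, A₂ a b ↔ A₂ (f₂ a) (f₂ b) := fun a b => hf₂ b a
  have hsh₁ : ∀ x, φ₁ (f₁ x) - φ₁ x = φ₁ v.1.1 - φ₁ u.1.1 := by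
    intro x
    have := auto_shift A₁ φ₁ hφ₁ hconn₁ f₁ hf₁ x u.1.1
    rw [hfu₁] at this
    omega
  have hsh₂ : ∀ x, φ₂ (f₂ x) - φ₂ x = φ₂ v.1.2 - φ₂ u.1.2 := by
    intro x
    have := auto_shift A₂ φ₂ hφ₂ hconn₂ f₂ hf₂' x u.1.2
    rw [hfu₂] at this
    omega
  have hc : φ₁ v.1.1 - φ₁ u.1.1 = φ₂ v.1.2 - φ₂ u.1.2 := by
    have h1 := u.2
    have h2 := v.2
    omega
  have hcompat : ∀ p : V₁ × V₂, φ₁ p.1 = φ₂ p.2 ↔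
      φ₁ ((f₁.prodCongr f₂) p).1 = φ₂ ((f₁.prodCongr f₂) p).2 := by
    intro p
    have h1 := hsh₁ p.1
    have h2 := hsh₂ p.2
    simp only [Equiv.prodCongr_apply, Prod.map_fst, Prod.map_snd]
    omega
  refine ⟨Equiv.subtypeEquiv (f₁.prodCongr f₂) hcompat, ?_, ?_⟩
  · intro a b
    simp only [Equiv.subtypeEquiv_apply, Equiv.prodCongr_apply, Prod.map_fst, Prod.map_snd]
    exact and_congr (hf₁ a.1.1 b.1.1) (hf₂' a.1.2 b.1.2)
  · apply Subtype.ext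
    simp only [Equiv.subtypeEquiv_apply, Equiv.prodCongr_apply]
    exact Prod.ext_iff.mpr ⟨hfu₁, hfu₂⟩

end Trans

/-- The layerwise direct product of the `(in 1, out 2)`-regular directed tree
with the `(in 2, out 1)`-regular directed tree (with their level functions) is
connected, vertex transitive, `(in 2, out 2)`-regular, and has `Δ(e) ≅ K₂,₂`
for every edge `e`. -/
theorem diestel_leader {V₁ V₂ : Type*}
    (A₁ : V₁ → V₁ → Prop) (A₂ : V₂ → V₂ → Prop)
    (φ₁ : V₁ → ℤ) (φ₂ : V₂ → ℤ)
    (htree₁ : (SimpleGraph.fromRel A₁).IsTree)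
    (htree₂ : (SimpleGraph.fromRel A₂).IsTree)
    (hin₁ : ∀ v : V₁, {u | A₁ u v}.ncard = 1)
    (hout₁ : ∀ v : V₁, {w | A₁ v w}.ncard = 2)
    (hin₂ : ∀ v : V₂, {u | A₂ u v}.ncard = 2)
    (hout₂ : ∀ v : V₂, {w | A₂ v w}.ncard = 1)
    (hZ₁ : IsEpiZ A₁ φ₁) (hZ₂ : IsEpiZ A₂ φ₂) :
    (∀ u v : {p : V₁ × V₂ // φ₁ p.1 = φ₂ p.2},
      Relation.ReflTransGen
        (fun a b : {p : V₁ × V₂ // φ₁ p.1 = φ₂ p.2} =>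
          (A₁ a.1.1 b.1.1 ∧ A₂ a.1.2 b.1.2) ∨ (A₁ b.1.1 a.1.1 ∧ A₂ b.1.2 a.1.2))
        u v) ∧
    (∀ u v : {p : V₁ × V₂ // φ₁ p.1 = φ₂ p.2},
      ∃ f : {p : V₁ × V₂ // φ₁ p.1 = φ₂ p.2} ≃ {p : V₁ × V₂ // φ₁ p.1 = φ₂ p.2},
        IsAuto (fun a b => A₁ a.1.1 b.1.1 ∧ A₂ a.1.2 b.1.2) f ∧ f u = v) ∧
    (∀ v : {p : V₁ × V₂ // φ₁ p.1 = φ₂ p.2},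
      {u : {p : V₁ × V₂ // φ₁ p.1 = φ₂ p.2} |
        A₁ u.1.1 v.1.1 ∧ A₂ u.1.2 v.1.2}.ncard = 2 ∧
      {w : {p : V₁ × V₂ // φ₁ p.1 = φ₂ p.2} |
        A₁ v.1.1 w.1.1 ∧ A₂ v.1.2 w.1.2}.ncard = 2) ∧
    (∀ e : {p : V₁ × V₂ // φ₁ p.1 = φ₂ p.2} × {p : V₁ × V₂ // φ₁ p.1 = φ₂ p.2},
      (A₁ e.1.1.1 e.2.1.1 ∧ A₂ e.1.1.2 e.2.1.2) →
      ∃ f : DeltaVerts (fun a b => A₁ a.1.1 b.1.1 ∧ A₂ a.1.2 b.1.2) e ≃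
          (Fin 2 × Fin 2),
        ∀ u v : DeltaVerts (fun a b => A₁ a.1.1 b.1.1 ∧ A₂ a.1.2 b.1.2) e,
          Reach (fun a b => A₁ a.1.1 b.1.1 ∧ A₂ a.1.2 b.1.2) e
              ((u : {p : V₁ × V₂ // φ₁ p.1 = φ₂ p.2}),
               (v : {p : V₁ × V₂ // φ₁ p.1 = φ₂ p.2})) ↔
            (f u).1 = 0 ∧ (f v).1 = 1) := by
  have hφ₁ := hZ₁.1
  have hφ₂ := hZ₂.1
  have hconn₁ := conn_of_tree A₁ htree₁
  have hconn₂ := conn_of_tree A₂ htree₂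
  refine ⟨?_, ?_, ?_, ?_⟩
  · exact dl_connected A₁ A₂ φ₁ φ₂ hφ₁ hφ₂ hin₁ hout₁ hin₂ hout₂ hconn₁ hconn₂
  · exact dl_transitive A₁ A₂ φ₁ φ₂ hφ₁ hφ₂ hin₁ hout₁ hin₂ hout₂ hconn₁ hconn₂
  · exact dl_degrees A₁ A₂ φ₁ φ₂ hφ₁ hφ₂ hin₁ hout₁ hin₂ hout₂
  · exact fun e he => delta_k22 A₁ A₂ φ₁ φ₂ hφ₁ hφ₂ hin₁ hout₂ hout₁ hin₂ e he
end

section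
/- If D is a highly arc transitive digraph with Property Z via φ, then all connected components of every layer φ^{-1}((i,i+1)) of D are isomorphic to the associated digraph Δ(D). -/
variable {V : Type*}

/-- Edges of the layer of `D` over `(i, i+1)`. -/
def LayerAdj (A : V → V → Prop) (φ : V → ℤ) (i : ℤ) (a b : V) : Prop :=
  A a b ∧ φ a = i ∧ φ b = i + 1

/-- The connected component of the vertex `w` in the layer over `(i, i+1)`. -/
def LayerComp (A : V → V → Prop) (φ : V → ℤ) (i : ℤ) (w : V) : Set V :=
  {v | Relation.ReflTransGen
    (fun a b => LayerAdj A φ i a b ∨ LayerAdj A φ i b a) w v}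

namespace HATProof

/-- walks from `e` to `f` of length `k+1` with pattern `true` -/
def Good (A : V → V → Prop) (e f : V × V) (k : ℕ) : Prop :=
  ∃ w : Fin (k+1) → V × V, IsAltWalk A w true ∧ w 0 = e ∧ w (Fin.last k) = f

theorem good_reach {A : V → V → Prop} {e f : V × V} {k : ℕ}
    (h : Good A e f k) : Reach A e f := by
  obtain ⟨w, hw, h0, hl⟩ := h
  exact ⟨k+1, w, true, hw, ⟨0, h0⟩, ⟨Fin.last k, hl⟩⟩

theorem good_self {A : V → V → Prop} {e : V × V} (he : A e.1 e.2) :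
    Good A e e 0 := by
  refine ⟨fun _ => e, ⟨fun i => he, fun i h => absurd h (by omega)⟩, rfl, rfl⟩

theorem good_snoc {A : V → V → Prop} {e f g : V × V} {k : ℕ}
    (h : Good A e f k) (hg : A g.1 g.2)
    (h0 : k % 2 = 0 → g.1 = f.1) (h1 : k % 2 ≠ 0 → g.2 = f.2) :
    Good A e g (k+1) := by
  obtain ⟨w, ⟨hwA, hwalt⟩, hw0, hwl⟩ := h
  refine ⟨fun i => if h : (i : ℕ) < k+1 then w ⟨(i : ℕ), h⟩ else g, ⟨?_, ?_⟩, ?_, ?_⟩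
  · intro i
    by_cases h : (i : ℕ) < k + 1
    · simpa [h] using hwA ⟨(i : ℕ), h⟩
    · simpa [h] using hg
  · intro i hi
    by_cases h : (i : ℕ) + 1 < k + 1
    · have h' : (i : ℕ) < k + 1 := by omega
      have := hwalt ⟨(i : ℕ), h'⟩ h
      simpa [h, h'] using this
    · have hik : (i : ℕ) = k := by omega
      have h' : (i : ℕ) < k + 1 := by omega
      have hwi : w ⟨(i : ℕ), h'⟩ = f := by
        have : (⟨(i : ℕ), h'⟩ : Fin (k+1)) = Fin.last k := by
          ext; simpa using hik
        rw [this, hwl]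
      have hnot : ¬ ((i : ℕ) + 1 < k + 1) := by omega
      by_cases hp : k % 2 = 0
      · have : ((i : ℕ) % 2 == 0) = true := by simp [hik, hp]
        simp [h', hnot, this, hwi, h0 hp]
      · have : ((i : ℕ) % 2 == 0) = false := by
          simp [hik]; omega
        simp [h', hnot, this, hwi, h1 hp]
  · simp [hw0]
  · simp

theorem good_succ {A : V → V → Prop} {e f : V × V} {k : ℕ}
    (h : Good A e f k) (hf : A f.1 f.2) : Good A e f (k+1) :=
  good_snoc h hf (fun _ => rfl) (fun _ => rfl)

theorem good_tail {A : V → V → Prop} {e f g : V × V} {k : ℕ}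
    (h : Good A e f k) (hf : A f.1 f.2) (hg : A g.1 g.2) (hfg : g.1 = f.1) :
    ∃ m, Good A e g m := by
  by_cases hp : k % 2 = 0
  · exact ⟨k+1, good_snoc h hg (fun _ => hfg) (fun h' => absurd hp h')⟩
  · exact ⟨k+2, good_snoc (good_succ h hf) hg (fun _ => hfg) (fun h' => by omega) ⟩

theorem good_head {A : V → V → Prop} {e f g : V × V} {k : ℕ}
    (h : Good A e f k) (hf : A f.1 f.2) (hg : A g.1 g.2) (hfg : g.2 = f.2) :
    ∃ m, Good A e g m := by
  by_cases hp : k % 2 = 0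
  · exact ⟨k+2, good_snoc (good_succ h hf) hg (fun h' => by omega) (fun _ => hfg)⟩
  · exact ⟨k+1, good_snoc h hg (fun h' => absurd h' hp) (fun _ => hfg)⟩


variable {A : V → V → Prop} {φ : V → ℤ}

theorem comp_good (hφ : ∀ u v, A u v → φ v = φ u + 1) {e : V × V} (he : A e.1 e.2)
    {a : V} (ha : a ∈ LayerComp A φ (φ e.1) e.1) :
    ∃ f k, Good A e f k ∧ A f.1 f.2 ∧
      ((φ a = φ e.1 ∧ f.1 = a) ∨ (φ a = φ e.1 + 1 ∧ f.2 = a)) := by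
  set j := φ e.1 with hj
  induction ha with
  | refl => exact ⟨e, 0, good_self he, he, Or.inl ⟨rfl, rfl⟩⟩
  | @tail b c hcb hstep ih =>
    obtain ⟨f, k, hg, hf, hcase⟩ := ih
    rcases hstep with ⟨hbc, hb, hc⟩ | ⟨hcb', hc, hb⟩
    · -- edge b → c, φ b = j, φ c = j + 1
      have hf1 : f.1 = b := by
        rcases hcase with ⟨_, h⟩ | ⟨h, _⟩
        · exact h
        · omega
      obtain ⟨m, hm⟩ := good_tail hg hf (g := (b, c)) hbc (by simp [hf1])
      exact ⟨(b, c), m, hm, hbc, Or.inr ⟨hc, rfl⟩⟩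
    · -- edge c → b, φ c = j, φ b = j + 1
      have hf2 : f.2 = b := by
        rcases hcase with ⟨h, _⟩ | ⟨_, h⟩
        · omega
        · exact h
      obtain ⟨m, hm⟩ := good_head hg hf (g := (c, b)) hcb' (by simp [hf2])
      exact ⟨(c, b), m, hm, hcb', Or.inl ⟨hc, rfl⟩⟩

theorem layer_reach (hφ : ∀ u v, A u v → φ v = φ u + 1) {e : V × V} (he : A e.1 e.2)
    {a b : V} (ha : a ∈ LayerComp A φ (φ e.1) e.1)
    (hab : LayerAdj A φ (φ e.1) a b) : Reach A e (a, b) := by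
  obtain ⟨f, k, hg, hf, hcase⟩ := comp_good hφ he ha
  have hf1 : f.1 = a := by
    rcases hcase with ⟨_, h⟩ | ⟨h, _⟩
    · exact h
    · have := hab.2.1; omega
  obtain ⟨m, hm⟩ := good_tail hg hf (g := (a, b)) hab.1 (by simp [hf1])
  exact good_reach hm


theorem reach_layer (hφ : ∀ u v, A u v → φ v = φ u + 1) {e f : V × V}
    (hr : Reach A e f) :
    LayerAdj A φ (φ e.1) f.1 f.2 ∧ f.1 ∈ LayerComp A φ (φ e.1) e.1 := by
  obtain ⟨n, w, b, ⟨hwA, hwalt⟩, ⟨i0, h0⟩, ⟨i1, h1⟩⟩ := hr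
  have pos : 0 < n := i0.pos
  -- heads are tails plus one
  have hht : ∀ i : Fin n, φ (w i).2 = φ (w i).1 + 1 := fun i => hφ _ _ (hwA i)
  -- tails have constant value
  have const : ∀ m (h : m < n), φ (w ⟨m, h⟩).1 = φ (w ⟨0, pos⟩).1 := by
    intro m
    induction m with
    | zero => intro h; rfl
    | succ m ih =>
      intro h
      have hm : m < n := by omega
      have halt := hwalt ⟨m, hm⟩ (by simpa using h)
      rw [← ih hm]
      split at halt
      · rw [halt]
      · have e1 := hht ⟨m, hm⟩
        have e2 := hht ⟨m+1, h⟩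
        have e3 : φ (w ⟨m, hm⟩).2 = φ (w ⟨m+1, h⟩).2 := by rw [halt]
        omega
  have constF : ∀ i : Fin n, φ (w i).1 = φ (w ⟨0, pos⟩).1 := by
    intro i
    have := const i.1 i.2
    simpa using this
  set j0 := φ (w ⟨0, pos⟩).1 with hj0
  have hje : φ e.1 = j0 := by rw [← h0]; exact constF i0
  set R := fun a b' => LayerAdj A φ j0 a b' ∨ LayerAdj A φ j0 b' a with hR
  have hRsymm : Symmetric R := fun a b' h => h.symm
  have conn : ∀ m (h : m < n),
      Relation.ReflTransGen R (w ⟨0, pos⟩).1 (w ⟨m, h⟩).1 := by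
    intro m
    induction m with
    | zero => intro h; exact Relation.ReflTransGen.refl
    | succ m ih =>
      intro h
      have hm : m < n := by omega
      have halt := hwalt ⟨m, hm⟩ (by simpa using h)
      refine (ih hm).trans ?_
      split at halt
      · rw [halt]
      · have s1 : LayerAdj A φ j0 (w ⟨m, hm⟩).1 (w ⟨m, hm⟩).2 :=
          ⟨hwA _, constF _, by rw [hht]; rw [constF]⟩
        have s2 : LayerAdj A φ j0 (w ⟨m+1, h⟩).1 (w ⟨m, hm⟩).2 := by
          rw [halt]
          exact ⟨hwA _, constF _, by rw [hht]; rw [constF]⟩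
        exact (Relation.ReflTransGen.single (show R _ _ from Or.inl s1)).trans
          (Relation.ReflTransGen.single (show R _ _ from Or.inr s2))
  have connF : ∀ i : Fin n, Relation.ReflTransGen R (w ⟨0, pos⟩).1 (w i).1 := by
    intro i
    have := conn i.1 i.2
    simpa using this
  have hconn : Relation.ReflTransGen R e.1 f.1 := by
    rw [← h0, ← h1]
    exact ((@Relation.ReflTransGen.stdSymm _ _ ⟨fun a b h => hRsymm h⟩).symm _ _ (connF i0)).trans (connF i1)
  constructor
  · rw [← h1]
    exact ⟨hwA i1, by rw [hje]; exact constF i1, by rw [hje, hht, constF]⟩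
  · rw [hje]
    exact hconn


theorem comp_congr {i : ℤ} {x y : V}
    (hxy : y ∈ LayerComp A φ i x) : LayerComp A φ i x = LayerComp A φ i y := by
  have hsymm : Symmetric (fun a b => LayerAdj A φ i a b ∨ LayerAdj A φ i b a) :=
    fun a b h => h.symm
  ext v
  constructor
  · intro hv
    exact ((@Relation.ReflTransGen.stdSymm _ _ ⟨fun a b h => hsymm h⟩).symm _ _ hxy).trans hv
  · intro hv
    exact Relation.ReflTransGen.trans hxy hv

theorem delta_eq (hφ : ∀ u v, A u v → φ v = φ u + 1) {e : V × V} (he : A e.1 e.2) :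
    DeltaVerts A e = LayerComp A φ (φ e.1) e.1 := by
  ext v
  constructor
  · rintro ⟨u, hvu | huv⟩
    · exact (reach_layer hφ hvu).2
    · obtain ⟨⟨hA, h1, h2⟩, hu⟩ := reach_layer hφ huv
      exact Relation.ReflTransGen.tail hu (Or.inl ⟨hA, h1, h2⟩)
  · intro hv
    obtain ⟨f, k, hg, hf, hcase⟩ := comp_good hφ he hv
    rcases hcase with ⟨_, hf1⟩ | ⟨_, hf2⟩
    · refine ⟨f.2, Or.inl ?_⟩
      have : (v, f.2) = f := by rw [← hf1]
      rw [this]; exact good_reach hg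
    · refine ⟨f.1, Or.inr ?_⟩
      have : (f.1, v) = f := by rw [← hf2]
      rw [this]; exact good_reach hg

theorem auto_symm {g : V ≃ V} (hg : IsAuto A g) : IsAuto A g.symm := by
  intro u v
  have := hg (g.symm u) (g.symm v)
  simp at this
  exact this.symm

theorem comp_transport {g : V ≃ V} (hg : IsAuto A g)
    (hφ : ∀ u v, A u v → φ v = φ u + 1) {d : ℤ} {i : ℤ} {w' : V}
    (hd : φ (g w') = φ w' + d) {x : V} (hx : x ∈ LayerComp A φ i w') :
    g x ∈ LayerComp A φ (i + d) (g w') ∧ φ (g x) = φ x + d := by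
  induction hx with
  | refl => exact ⟨Relation.ReflTransGen.refl, hd⟩
  | @tail b c hb hstep ih =>
    obtain ⟨ihc, ihφ⟩ := ih
    rcases hstep with ⟨hA, h1, h2⟩ | ⟨hA, h1, h2⟩
    · have hA' : A (g b) (g c) := (hg b c).1 hA
      have hgc : φ (g c) = φ c + d := by
        have := hφ _ _ hA'
        omega
      exact ⟨ihc.tail (Or.inl ⟨hA', by omega, by omega⟩), hgc⟩
    · have hA' : A (g c) (g b) := (hg c b).1 hA
      have hgc : φ (g c) = φ c + d := by
        have := hφ _ _ hA'
        omega
      exact ⟨ihc.tail (Or.inr ⟨hA', by omega, by omega⟩), hgc⟩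

theorem vertex_trans (hH : IsHAT A) (x y : V) :
    ∃ g : V ≃ V, IsAuto A g ∧ g x = y := by
  obtain ⟨-, htrans⟩ := hH 0
  obtain ⟨f, hf, hfi⟩ := htrans (fun _ => x) (fun _ => y)
    (fun i => i.elim0) (fun i => i.elim0)
  exact ⟨f, hf, hfi 0⟩

theorem edge_trans (hH : IsHAT A) {a b c d : V} (hab : A a b) (hcd : A c d) :
    ∃ g : V ≃ V, IsAuto A g ∧ g a = c ∧ g b = d := by
  obtain ⟨-, htrans⟩ := hH 1
  obtain ⟨f, hf, hfi⟩ := htrans ![a, b] ![c, d]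
    (by intro i; fin_cases i; simpa using hab)
    (by intro i; fin_cases i; simpa using hcd)
  refine ⟨f, hf, ?_, ?_⟩
  · simpa using hfi 0
  · simpa using hfi 1

theorem out_edge (hH : IsHAT A) (hE : ∃ u v, A u v) (x : V) : ∃ y, A x y := by
  obtain ⟨u, v, huv⟩ := hE
  obtain ⟨g, hg, hgx⟩ := vertex_trans hH u x
  exact ⟨g v, hgx ▸ (hg u v).1 huv⟩

theorem in_edge (hH : IsHAT A) (hE : ∃ u v, A u v) (x : V) : ∃ y, A y x := by
  obtain ⟨u, v, huv⟩ := hE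
  obtain ⟨g, hg, hgx⟩ := vertex_trans hH v x
  exact ⟨g u, hgx ▸ (hg u v).1 huv⟩

end HATProof

/-- In a HAT digraph with Property Z, every connected component of every layer
is isomorphic to the associated digraph `Δ(D)`. -/
theorem layer_components_iso_delta (A : V → V → Prop) (φ : V → ℤ)
    (hH : IsHAT A) (hZ : IsEpiZ A φ) (e : V × V) (he : A e.1 e.2)
    (i : ℤ) (w : V) (hw : φ w = i ∨ φ w = i + 1) :
    ∃ f : LayerComp A φ i w ≃ DeltaVerts A e,
      ∀ u v : LayerComp A φ i w,
        LayerAdj A φ i (u : V) (v : V) ↔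
          Reach A e ((f u : V), (f v : V)) := by
  classical
  obtain ⟨hφ, -, hEdge⟩ := hZ
  have hE : ∃ u v, A u v := by
    obtain ⟨u, v, huv, -⟩ := hEdge 0
    exact ⟨u, v, huv⟩
  -- choose a layer edge at w
  obtain ⟨ew, hew, hwcase⟩ :
      ∃ ew : V × V, A ew.1 ew.2 ∧
        ((φ w = i ∧ ew.1 = w) ∨ (φ w = i + 1 ∧ ew.2 = w)) := by
    rcases hw with h | h
    · obtain ⟨y, hy⟩ := HATProof.out_edge hH hE w
      exact ⟨(w, y), hy, Or.inl ⟨h, rfl⟩⟩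
    · obtain ⟨y, hy⟩ := HATProof.in_edge hH hE w
      exact ⟨(y, w), hy, Or.inr ⟨h, rfl⟩⟩
  obtain ⟨g, hg, hg1, hg2⟩ := HATProof.edge_trans hH hew he
  have he2 : φ e.2 = φ e.1 + 1 := hφ _ _ he
  have hew2 : φ ew.2 = φ ew.1 + 1 := hφ _ _ hew
  set d : ℤ := φ e.1 - i with hdd
  have hd : φ (g w) = φ w + d := by
    rcases hwcase with ⟨h, hww⟩ | ⟨h, hww⟩
    · rw [← hww] at h
      rw [← hww, hg1]; omega
    · rw [← hww] at h
      rw [← hww, hg2]; omega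
  have gw_comp : g w ∈ LayerComp A φ (φ e.1) e.1 := by
    rcases hwcase with ⟨h, hww⟩ | ⟨h, hww⟩
    · rw [← hww, hg1]
      exact Relation.ReflTransGen.refl
    · rw [← hww, hg2]
      exact Relation.ReflTransGen.single (Or.inl ⟨he, rfl, he2⟩)
  have comp_eq : LayerComp A φ (φ e.1) e.1 = LayerComp A φ (φ e.1) (g w) :=
    HATProof.comp_congr gw_comp
  have hid : i + d = φ e.1 := by omega
  have fwd : ∀ x ∈ LayerComp A φ i w,
      g x ∈ LayerComp A φ (φ e.1) e.1 ∧ φ (g x) = φ x + d := by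
    intro x hx
    have := HATProof.comp_transport hg hφ hd hx
    rw [hid] at this
    exact ⟨comp_eq ▸ this.1, this.2⟩
  have bwd : ∀ y ∈ LayerComp A φ (φ e.1) e.1, g.symm y ∈ LayerComp A φ i w := by
    intro y hy
    have hd' : φ (g.symm (g w)) = φ (g w) + (-d) := by simp; omega
    have hy' : y ∈ LayerComp A φ (φ e.1) (g w) := comp_eq ▸ hy
    have := (HATProof.comp_transport (HATProof.auto_symm hg) hφ hd' hy').1
    have hii : φ e.1 + (-d) = i := by omega
    rw [hii] at this
    simpa using this
  have hdelta : DeltaVerts A e = LayerComp A φ (φ e.1) e.1 :=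
    HATProof.delta_eq hφ he
  have key : ∀ u v : LayerComp A φ i w,
      LayerAdj A φ i (u : V) (v : V) ↔ Reach A e (g (u : V), g (v : V)) := by
    intro u v
    constructor
    · rintro ⟨hA, h1, h2⟩
      have hgu := fwd u u.2
      have hgv : A (g u) (g v) := (hg _ _).1 hA
      refine HATProof.layer_reach hφ he hgu.1 ⟨hgv, ?_, ?_⟩
      · omega
      · have := hφ _ _ hgv
        omega
    · intro hr
      have hlr := HATProof.reach_layer hφ (e := e) (f := (g u, g v)) hr
      obtain ⟨⟨hA', h1', h2'⟩, -⟩ := hlr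
      simp only at hA' h1' h2'
      have hAuv : A (u : V) (v : V) := (hg _ _).2 hA'
      have hgu := (fwd u u.2).2
      have hφv := hφ _ _ hAuv
      exact ⟨hAuv, by omega, by omega⟩
  exact ⟨⟨fun x => ⟨g x, by rw [hdelta]; exact (fwd x x.2).1⟩,
           fun y => ⟨g.symm y, bwd y (by rw [← hdelta]; exact y.2)⟩,
           fun x => Subtype.ext (by simp),
           fun y => Subtype.ext (by simp)⟩, key⟩
end
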